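/- arXiv:0807.4200 — 14 statements merged into one kernel-verified Lean document; each statement's English description precedes it below -/
import Mathlib

section
/- Let F be a distribution function on ℝ with infinite right endpoint belonging to the Gumbel maximal domain of attraction with auxiliary function f (i.e., for all x ∈ ℝ, lim_{t→∞} (1-F(t+x f(t)))/(1-F(t)) = e^{-x}). Then f(t)/t → 0 as t → ∞. -/
open Filter Real

/-! Taking `x = -b` in the defining limit shows that `(1 - F t)⁻¹`, which dominates the ratio
`(1 - F (t - b f t)) / (1 - F t)`, eventually exceeds `b`; so the tail `1 - F t` tends to `0`.
If `|f t| ≥ ε t` for arbitrarily large `t`, then for one of `x = ±1/ε` the point `t + x f t`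
lies left of `0`, so the ratio is at least `(1 - F 0) / (1 - F t) → ∞`, whereas it should stay
close to `exp (-x) ≤ exp (1/ε)`. -/

theorem tendsto_inv_one_sub_atTop_of_tendsto_ratio {F f : ℝ → ℝ}
    (hF0 : ∀ x, 0 ≤ F x) (hF1 : ∀ x, F x < 1)
    (hMDA : ∀ x : ℝ, Tendsto (fun t => (1 - F (t + x * f t)) / (1 - F t))
      atTop (nhds (exp (-x)))) :
    Tendsto (fun t => (1 - F t)⁻¹) atTop atTop := by
  rw [tendsto_atTop]
  intro b
  have hb : b < exp (-(-b)) := by rw [neg_neg]; linarith [add_one_le_exp b]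
  filter_upwards [(hMDA (-b)).eventually (eventually_gt_nhds hb)] with t ht
  calc b ≤ (1 - F (t + -b * f t)) / (1 - F t) := ht.le
    _ ≤ (1 - F t)⁻¹ := by
      rw [div_eq_mul_inv]
      exact mul_le_of_le_one_left (inv_nonneg.2 (sub_pos.2 (hF1 t)).le)
        (by linarith [hF0 (t + -b * f t)])

theorem one_sub_div_le_of_nonpos {F : ℝ → ℝ} (hmono : Monotone F) (hF1 : ∀ x, F x < 1)
    {y : ℝ} (hy : y ≤ 0) (t : ℝ) :
    (1 - F 0) * (1 - F t)⁻¹ ≤ (1 - F y) / (1 - F t) := by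
  rw [div_eq_mul_inv]
  exact mul_le_mul_of_nonneg_right (by linarith [hmono hy]) (inv_nonneg.2 (sub_pos.2 (hF1 t)).le)

theorem add_mul_nonpos_or_sub_mul_nonpos {ε t a : ℝ} (hε : 0 < ε) (ht : 0 < t)
    (h : ε ≤ |a / t|) : t + ε⁻¹ * a ≤ 0 ∨ t + -ε⁻¹ * a ≤ 0 := by
  rw [abs_div, abs_of_pos ht, le_div_iff₀ ht] at h
  have key : t ≤ ε⁻¹ * |a| := by
    rw [inv_mul_eq_div, le_div_iff₀ hε]; linarith
  rcases abs_cases a with ⟨ha, -⟩ | ⟨ha, -⟩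
  · right; rw [ha] at key; linarith
  · left; rw [ha] at key; linarith

theorem stmt_0_general (F f : ℝ → ℝ)
    (hmono : Monotone F) (hrange : ∀ x, 0 ≤ F x ∧ F x ≤ 1)
    (hend : ∀ x, F x < 1)
    (hMDA : ∀ x : ℝ, Tendsto (fun t => (1 - F (t + x * f t)) / (1 - F t))
      atTop (nhds (Real.exp (-x)))) :
    Tendsto (fun t => f t / t) atTop (nhds 0) := by
  have hinv := tendsto_inv_one_sub_atTop_of_tendsto_ratio (fun x => (hrange x).1) hend hMDA
  rw [Metric.tendsto_nhds]
  intro ε hε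
  have hratio : ∀ x, |x| ≤ ε⁻¹ → ∀ᶠ t in atTop,
      (1 - F (t + x * f t)) / (1 - F t) < exp ε⁻¹ + 1 := fun x hx =>
    (hMDA x).eventually <| eventually_lt_nhds <| by
      linarith [exp_le_exp.2 (neg_le_abs x |>.trans hx)]
  filter_upwards [hratio ε⁻¹ (by rw [abs_of_pos (inv_pos.2 hε)]),
    hratio (-ε⁻¹) (by rw [abs_neg, abs_of_pos (inv_pos.2 hε)]),
    (hinv.const_mul_atTop (sub_pos.2 (hend 0))).eventually_gt_atTop (exp ε⁻¹ + 1),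
    eventually_gt_atTop 0] with t hplus hminus hbig ht
  rw [Real.dist_eq, sub_zero]
  by_contra! hfar
  rcases add_mul_nonpos_or_sub_mul_nonpos hε ht hfar with hy | hy <;>
    linarith [one_sub_div_le_of_nonpos hmono hend hy t]

/-- If `F` is a distribution function with infinite right endpoint belonging to the
Gumbel maximal domain of attraction with auxiliary function `f`, then `f(t)/t → 0`. -/
theorem stmt_0 (F f : ℝ → ℝ)
    (hmono : Monotone F) (hrange : ∀ x, 0 ≤ F x ∧ F x ≤ 1)
    (hend : ∀ x, F x < 1)
    (hfpos : ∀ x, 0 < f x)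
    (hMDA : ∀ x : ℝ, Tendsto (fun t => (1 - F (t + x * f t)) / (1 - F t))
      atTop (nhds (Real.exp (-x)))) :
    Tendsto (fun t => f t / t) atTop (nhds 0) :=
  stmt_0_general F f hmono hrange hend hMDA
end

section
/- Let (X,Y) be random variables where X has distribution F ∈ MDA(Λ) with auxiliary function f, F has infinite right endpoint, and suppose for every t > 0, P(|Y| > t f(x) | X > x) → 0 as x → ∞. If the auxiliary function is self-neglecting (f(t + x f(t))/f(t) → 1 for every x), then for all x ∈ ℝ and t > 0, lim_{u→∞} P(|Y| > t f(u) | X > u + x f(u)) = 0. -/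
/-!
The substitution `v(u) = u + x f(u)` reduces the claim to the hypothesis at the level `v(u)`.
The `MDA(Λ)` ratio tends to `e^{-x}` while `1 - F(u) → 0`, so `1 - F(v(u)) → 0`; as `F < 1`
everywhere, this forces `v(u) → ∞`. Self-neglect gives `f(v(u)) < 2 f(u)` eventually, so the
event `|Y| > t f(u)` is contained in `|Y| > (t/2) f(v(u))`, whose conditional probability given
`X > v(u)` tends to `0`.
-/

open MeasureTheory Filter Topology

theorem Filter.Tendsto.tendsto_zero_of_div_of_tendsto_zero {ι K : Type*} [Field K]
    [TopologicalSpace K] [ContinuousMul K] {l : Filter ι} {g h : ι → K} {a : K}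
    (hdiv : Tendsto (fun i => g i / h i) l (𝓝 a)) (hh : Tendsto h l (𝓝 0))
    (hne : ∀ᶠ i in l, h i ≠ 0) : Tendsto g l (𝓝 0) := by
  have hmul := hdiv.mul hh
  rw [mul_zero] at hmul
  refine hmul.congr' ?_
  filter_upwards [hne] with i hi
  exact div_mul_cancel₀ (g i) hi

theorem tendsto_atTop_of_monotone_of_tendsto_comp {ι α β : Type*} [LinearOrder α]
    [LinearOrder β] [TopologicalSpace β] [ClosedIicTopology β] {l : Filter ι} {F : α → β}
    {v : ι → α} {c : β} (hmono : Monotone F) (hlt : ∀ a, F a < c)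
    (hlim : Tendsto (F ∘ v) l (𝓝 c)) : Tendsto v l atTop := by
  refine tendsto_atTop.2 fun a => ?_
  filter_upwards [hlim.eventually (eventually_gt_nhds (hlt a))] with i hi
  exact (hmono.reflect_lt hi).le

section DistributionFunction

variable {Ω : Type*} [MeasurableSpace Ω] (ℙ : Measure Ω) (X : Ω → ℝ)

theorem monotone_toReal_measure_setOf_le [IsFiniteMeasure ℙ] :
    Monotone fun x => (ℙ {ω | X ω ≤ x}).toReal :=
  fun _ _ hab => ENNReal.toReal_mono (measure_ne_top _ _)
    (measure_mono fun _ hω => le_trans hω hab)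

theorem tendsto_toReal_measure_setOf_le_atTop [IsProbabilityMeasure ℙ] :
    Tendsto (fun x => (ℙ {ω | X ω ≤ x}).toReal) atTop (𝓝 1) := by
  have hunion : ⋃ x : ℝ, {ω | X ω ≤ x} = Set.univ :=
    Set.eq_univ_of_forall fun ω => Set.mem_iUnion.2 ⟨X ω, le_rfl (a := X ω)⟩
  have hlim := tendsto_measure_iUnion_atTop (μ := ℙ)
    (s := fun x : ℝ => {ω | X ω ≤ x}) fun _ _ hab _ hω => le_trans hω hab
  rw [hunion, measure_univ] at hlim
  simpa [Function.comp_def] using (ENNReal.tendsto_toReal ENNReal.one_ne_top).comp hlim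

end DistributionFunction

theorem tendsto_add_mul_atTop_of_tendsto_tail_ratio {F f : ℝ → ℝ} {x L : ℝ}
    (hmono : Monotone F) (hlt : ∀ a, F a < 1) (hlim : Tendsto F atTop (𝓝 1))
    (hratio : Tendsto (fun t => (1 - F (t + x * f t)) / (1 - F t)) atTop (𝓝 L)) :
    Tendsto (fun t => t + x * f t) atTop atTop := by
  have htail : Tendsto (fun t => 1 - F t) atTop (𝓝 0) := by
    simpa using hlim.const_sub 1
  have htail_comp := hratio.tendsto_zero_of_div_of_tendsto_zero htail
    (Eventually.of_forall fun a => sub_ne_zero.2 (hlt a).ne')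
  refine tendsto_atTop_of_monotone_of_tendsto_comp hmono hlt ?_
  simpa [Function.comp_def] using htail_comp.const_sub 1

theorem stmt_1_general {Ω : Type*} [MeasurableSpace Ω] (ℙ : Measure Ω) [IsProbabilityMeasure ℙ]
    (X Y : Ω → ℝ)
    (F f : ℝ → ℝ)
    (hF : ∀ x, F x = (ℙ {ω | X ω ≤ x}).toReal)
    (hend : ∀ x, F x < 1)
    (hfpos : ∀ x, 0 < f x)
    (hMDA : ∀ x : ℝ, Tendsto (fun t => (1 - F (t + x * f t)) / (1 - F t))
      atTop (nhds (Real.exp (-x))))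
    (hself : ∀ x : ℝ, Tendsto (fun t => f (t + x * f t) / f t) atTop (nhds 1))
    (hcond : ∀ t > (0:ℝ), Tendsto (fun x =>
      (ℙ {ω | |Y ω| > t * f x ∧ X ω > x}).toReal / (ℙ {ω | X ω > x}).toReal)
      atTop (nhds 0)) :
    ∀ (x : ℝ), ∀ t > (0:ℝ), Tendsto (fun u =>
      (ℙ {ω | |Y ω| > t * f u ∧ X ω > u + x * f u}).toReal /
        (ℙ {ω | X ω > u + x * f u}).toReal) atTop (nhds 0) := by
  intro x t ht
  obtain rfl : F = fun x => (ℙ {ω | X ω ≤ x}).toReal := funext hF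
  have hv := tendsto_add_mul_atTop_of_tendsto_tail_ratio
    (monotone_toReal_measure_setOf_le ℙ X) hend
    (tendsto_toReal_measure_setOf_le_atTop ℙ X) (hMDA x)
  have hf_lt : ∀ᶠ u in atTop, f (u + x * f u) < 2 * f u := by
    filter_upwards [(hself x).eventually (eventually_lt_nhds one_lt_two)] with u hu
    exact (div_lt_iff₀ (hfpos u)).1 hu
  refine squeeze_zero' (Eventually.of_forall fun u => by positivity) ?_
    ((hcond (t / 2) (half_pos ht)).comp hv)
  filter_upwards [hf_lt] with u hu
  refine div_le_div_of_nonneg_right (ENNReal.toReal_mono (measure_ne_top _ _)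
    (measure_mono fun ω ⟨hY, hX⟩ => ⟨?_, hX⟩)) ENNReal.toReal_nonneg
  calc t / 2 * f (u + x * f u) < t / 2 * (2 * f u) := by gcongr
    _ = t * f u := by ring
    _ < |Y ω| := hY

/-- If `X` has distribution `F ∈ MDA(Λ)` with self-neglecting auxiliary function `f`,
`F` has infinite right endpoint, and `P(|Y| > t f(x) | X > x) → 0` for all `t > 0`,
then for all `x ∈ ℝ` and `t > 0`, `P(|Y| > t f(u) | X > u + x f(u)) → 0` as `u → ∞`. -/
theorem stmt_1 {Ω : Type*} [MeasurableSpace Ω] (ℙ : Measure Ω) [IsProbabilityMeasure ℙ]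
    (X Y : Ω → ℝ) (hXm : Measurable X) (hYm : Measurable Y)
    (F f : ℝ → ℝ)
    (hF : ∀ x, F x = (ℙ {ω | X ω ≤ x}).toReal)
    (hend : ∀ x, F x < 1)
    (hfpos : ∀ x, 0 < f x)
    (hMDA : ∀ x : ℝ, Tendsto (fun t => (1 - F (t + x * f t)) / (1 - F t))
      atTop (nhds (Real.exp (-x))))
    (hself : ∀ x : ℝ, Tendsto (fun t => f (t + x * f t) / f t) atTop (nhds 1))
    (hcond : ∀ t > (0:ℝ), Tendsto (fun x =>
      (ℙ {ω | |Y ω| > t * f x ∧ X ω > x}).toReal / (ℙ {ω | X ω > x}).toReal)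
      atTop (nhds 0)) :
    ∀ (x : ℝ), ∀ t > (0:ℝ), Tendsto (fun u =>
      (ℙ {ω | |Y ω| > t * f u ∧ X ω > u + x * f u}).toReal /
        (ℙ {ω | X ω > u + x * f u}).toReal) atTop (nhds 0) :=
  stmt_1_general ℙ X Y F f hF hend hfpos hMDA hself hcond
end

section
/- Suppose X has distribution F ∈ MDA(Λ) with auxiliary function f and infinite right endpoint, and for all t > 0, lim_{x→∞} P(|Y| > t f(x) | X > x) = 0. Then lim_{x→∞} P(X > x, Y > x)/P(X > x) = 0. -/
open MeasureTheory Filter Real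

lemma eventually_lt_self_of_tendsto_div_zero {f : ℝ → ℝ}
    (hf : Tendsto (fun x => f x / x) atTop (nhds 0)) : ∀ᶠ x in atTop, f x < x := by
  filter_upwards [hf.eventually (eventually_lt_nhds one_pos), eventually_gt_atTop 0]
    with x hx hx0
  exact (div_lt_one hx0).mp hx

theorem stmt_2_general {Ω : Type*} [MeasurableSpace Ω] (ℙ : Measure Ω) [IsProbabilityMeasure ℙ]
    (X Y : Ω → ℝ)
    (f : ℝ → ℝ)
    (hfx : Tendsto (fun x => f x / x) atTop (nhds 0))
    (hcond : ∀ t > (0:ℝ), Tendsto (fun x =>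
      (ℙ {ω | |Y ω| > t * f x ∧ X ω > x}).toReal / (ℙ {ω | X ω > x}).toReal)
      atTop (nhds 0)) :
    Tendsto (fun x =>
      (ℙ {ω | X ω > x ∧ Y ω > x}).toReal / (ℙ {ω | X ω > x}).toReal)
      atTop (nhds 0) := by
  -- Once `f x < x`, the event `Y > x` is contained in `|Y| > 1 * f x`.
  refine tendsto_of_tendsto_of_tendsto_of_le_of_le' tendsto_const_nhds (hcond 1 one_pos)
    (Eventually.of_forall fun x => by positivity) ?_
  filter_upwards [eventually_lt_self_of_tendsto_div_zero hfx] with x hfx_lt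
  refine div_le_div_of_nonneg_right
    (ENNReal.toReal_mono (measure_ne_top ℙ _) (measure_mono ?_)) ENNReal.toReal_nonneg
  rintro ω ⟨hX, hY⟩
  exact ⟨by linarith [le_abs_self (Y ω)], hX⟩

/-- If `X` has distribution `F ∈ MDA(Λ)` with auxiliary function `f` (so `f(x)/x → 0`)
and infinite right endpoint, and `P(|Y| > t f(x) | X > x) → 0` for all `t > 0`, then
`P(X > x, Y > x)/P(X > x) → 0`. -/
theorem stmt_2 {Ω : Type*} [MeasurableSpace Ω] (ℙ : Measure Ω) [IsProbabilityMeasure ℙ]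
    (X Y : Ω → ℝ) (hXm : Measurable X) (hYm : Measurable Y)
    (F f : ℝ → ℝ)
    (hF : ∀ x, F x = (ℙ {ω | X ω ≤ x}).toReal)
    (hend : ∀ x, F x < 1)
    (hfpos : ∀ x, 0 < f x)
    (hfx : Tendsto (fun x => f x / x) atTop (nhds 0))
    (hMDA : ∀ x : ℝ, Tendsto (fun t => (1 - F (t + x * f t)) / (1 - F t))
      atTop (nhds (Real.exp (-x))))
    (hcond : ∀ t > (0:ℝ), Tendsto (fun x =>
      (ℙ {ω | |Y ω| > t * f x ∧ X ω > x}).toReal / (ℙ {ω | X ω > x}).toReal)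
      atTop (nhds 0)) :
    Tendsto (fun x =>
      (ℙ {ω | X ω > x ∧ Y ω > x}).toReal / (ℙ {ω | X ω > x}).toReal)
      atTop (nhds 0) :=
  stmt_2_general ℙ X Y f hfx hcond
end

section
/- Let (X,Y) satisfy: (1) X has distribution F ∈ MDA(Λ) with infinite right endpoint and auxiliary function f; (2) lim_{x→∞} P(Y > x)/P(X > x) = c ∈ [0,∞); (3) for all t > 0, P(|Y| > t f(x) | X > x) → 0; (4) for all t > 0, P(|X| > t f(x) | Y > x) → 0; (5) there exists L > 0 with P(Y > L f(x), X > L f(x))/P(X > x) → 0. Then P(X + Y > x) ∼ (1 + c) P(X > x) as x → ∞. -/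
open MeasureTheory Filter Real Topology

/-!
Split `{X + Y > x}` at the scale `t f(x)`. If `|Y| ≤ t f(x)` the event is essentially
`{X > x ∓ t f(x)}`, if `|X| ≤ t f(x)` it is essentially `{Y > x ∓ t f(x)}`, and assumptions (3)–(5)
make every remaining configuration negligible against `P(X > x)`. Since
`P(X > x ∓ t f(x)) ∼ e^{±t} P(X > x)` and `P(Y > x ∓ t f(x)) ∼ c e^{±t} P(X > x)`, the ratio
`P(X + Y > x) / P(X > x)` is eventually squeezed between `(1 + c) e^{-t}` and `(1 + c) e^{t}`;
let `t → 0`. To transfer the negligibility assumptions from `x` to `x - M f(x)` one uses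
`f(x - M f(x)) ≤ 2 f(x)`, which follows from the Gumbel limit itself.
-/

section Limits

variable {α : Type*} {l : Filter α}

theorem Filter.Tendsto.div_mul_div {a b d : α → ℝ} {m k : ℝ}
    (h₁ : Tendsto (fun x => a x / b x) l (𝓝 m)) (h₂ : Tendsto (fun x => b x / d x) l (𝓝 k))
    (hab : ∀ x, b x = 0 → a x = 0) : Tendsto (fun x => a x / d x) l (𝓝 (m * k)) :=
  (h₁.mul h₂).congr fun x => by rw [← mul_div_assoc, div_mul_cancel_of_imp (hab x)]

theorem tendsto_of_forall_pos_bounds {g : α → ℝ} {a : ℝ} {lo hi : ℝ → ℝ}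
    (hlo : Tendsto lo (𝓝[>] 0) (𝓝 a)) (hhi : Tendsto hi (𝓝[>] 0) (𝓝 a))
    (hlow : ∀ t > 0, ∃ W : α → ℝ, (∀ᶠ x in l, W x ≤ g x) ∧ Tendsto W l (𝓝 (lo t)))
    (hup : ∀ t > 0, ∃ V : α → ℝ, (∀ᶠ x in l, g x ≤ V x) ∧ Tendsto V l (𝓝 (hi t))) :
    Tendsto g l (𝓝 a) := by
  refine tendsto_order.2 ⟨fun b hb => ?_, fun b hb => ?_⟩
  · obtain ⟨t, hbt, ht⟩ := ((hlo.eventually_const_lt hb).and self_mem_nhdsWithin).exists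
    obtain ⟨W, hWg, hW⟩ := hlow t ht
    filter_upwards [hWg, hW.eventually_const_lt hbt] with x hx hbx using hbx.trans_le hx
  · obtain ⟨t, htb, ht⟩ := ((hhi.eventually_lt_const hb).and self_mem_nhdsWithin).exists
    obtain ⟨V, hgV, hV⟩ := hup t ht
    filter_upwards [hgV, hV.eventually_lt_const htb] with x hx hxb using hx.trans_lt hxb

end Limits

section Tail

variable {T : ℝ → ℝ}

theorem tendsto_atTop_of_tendsto_comp_div (hpos : ∀ x, 0 < T x) (hanti : Antitone T)
    (hlim : Tendsto T atTop (𝓝 0)) {ψ : ℝ → ℝ} {k : ℝ}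
    (h : Tendsto (fun x => T (ψ x) / T x) atTop (𝓝 k)) : Tendsto ψ atTop atTop := by
  have hTψ : Tendsto (fun x => T (ψ x)) atTop (𝓝 0) := by
    simpa using (h.mul hlim).congr fun x => div_mul_cancel₀ _ (hpos x).ne'
  refine tendsto_atTop.2 fun b => ?_
  filter_upwards [hTψ.eventually_lt_const (hpos b)] with x hx
  by_contra! hxb
  exact (hanti hxb.le).not_gt hx

theorem tendsto_comp_div_of_tendsto_div {G φ : ℝ → ℝ} {c k : ℝ} (hpos : ∀ x, 0 < T x)
    (hanti : Antitone T) (hlim : Tendsto T atTop (𝓝 0))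
    (hGT : Tendsto (fun x => G x / T x) atTop (𝓝 c))
    (hφ : Tendsto (fun x => T (φ x) / T x) atTop (𝓝 k)) :
    Tendsto (fun x => G (φ x) / T x) atTop (𝓝 (c * k)) :=
  (hGT.comp (tendsto_atTop_of_tendsto_comp_div hpos hanti hlim hφ)).div_mul_div hφ
    fun _ h => absurd h (hpos _).ne'

end Tail

structure GumbelTail (T f : ℝ → ℝ) : Prop where
  pos : ∀ x, 0 < T x
  antitone : Antitone T
  tendsto_zero : Tendsto T atTop (𝓝 0)
  tendsto_ratio : ∀ s, Tendsto (fun x => T (x + s * f x) / T x) atTop (𝓝 (exp (-s)))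

namespace GumbelTail

variable {T f : ℝ → ℝ}

theorem tendsto_sub_ratio (hT : GumbelTail T f) (M : ℝ) :
    Tendsto (fun x => T (x - M * f x) / T x) atTop (𝓝 (exp M)) := by
  simpa [← sub_eq_add_neg] using hT.tendsto_ratio (-M)

theorem tendsto_sub_mul_atTop (hT : GumbelTail T f) (M : ℝ) :
    Tendsto (fun x => x - M * f x) atTop atTop :=
  tendsto_atTop_of_tendsto_comp_div hT.pos hT.antitone hT.tendsto_zero (hT.tendsto_sub_ratio M)

/-- Otherwise `y + (M + 3) f y ≥ x + (M + 6) f x` for `y = x - M f x`, and the Gumbel limits at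
`y` and at `x` (with `T x ≤ T y`) give `e^{-(M+3)} / 2 < 2 e^{-(M+6)}`, i.e. `e^3 < 4`. -/
theorem eventually_le_two_mul (hT : GumbelTail T f) (hf : ∀ x, 0 < f x) {M : ℝ} (hM : 0 ≤ M) :
    ∀ᶠ x in atTop, f (x - M * f x) ≤ 2 * f x := by
  have h₁ : ∀ᶠ x in atTop, exp (-(M + 3)) / 2 * T (x - M * f x) <
      T (x - M * f x + (M + 3) * f (x - M * f x)) := by
    filter_upwards [hT.tendsto_sub_mul_atTop M |>.eventually
      ((hT.tendsto_ratio (M + 3)).eventually_const_lt (half_lt_self (exp_pos _)))] with x hx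
    exact (lt_div_iff₀ (hT.pos _)).1 hx
  have h₂ : ∀ᶠ x in atTop, T (x + (M + 6) * f x) < 2 * exp (-(M + 6)) * T x := by
    filter_upwards [(hT.tendsto_ratio (M + 6)).eventually_lt_const
      (lt_two_mul_self (exp_pos _))] with x hx
    exact (div_lt_iff₀ (hT.pos x)).1 hx
  filter_upwards [h₁, h₂] with x h₁ h₂
  by_contra! hbig
  set y := x - M * f x
  have hfx := hf x
  have hTxy : T x ≤ T y := hT.antitone (by nlinarith)
  have hshift : T (y + (M + 3) * f y) ≤ T (x + (M + 6) * f x) := hT.antitone (by nlinarith)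
  have hdrop : exp (-(M + 3)) / 2 * T y < 2 * exp (-(M + 6)) * T y := by
    nlinarith [exp_pos (-(M + 6))]
  have hexp : 2 * exp (-(M + 6)) ≤ exp (-(M + 3)) / 2 := by
    have he3 : 4 ≤ exp 3 := by linarith [add_one_le_exp (3 : ℝ)]
    rw [show -(M + 3) = 3 + -(M + 6) by ring, exp_add]
    nlinarith [exp_pos (-(M + 6))]
  nlinarith [hT.pos y]

end GumbelTail

section Probability

variable {Ω : Type*} [MeasurableSpace Ω] {ℙ : Measure Ω}

/-- Assumptions (3) and (4): given `W > x`, the variable `Z` is of smaller order than `f x`. -/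
def TailNegligible (ℙ : Measure Ω) (Z W : Ω → ℝ) (f : ℝ → ℝ) : Prop :=
  ∀ t > 0, Tendsto (fun x => ℙ.real {ω | |Z ω| > t * f x ∧ W ω > x} / ℙ.real {ω | W ω > x})
    atTop (𝓝 0)

theorem TailNegligible.tendsto_sub_div [IsFiniteMeasure ℙ] {Z W : Ω → ℝ} {T f : ℝ → ℝ}
    {t M k : ℝ} (h : TailNegligible ℙ Z W f) (hT : GumbelTail T f) (hf : ∀ x, 0 < f x)
    (ht : 0 < t) (hM : 0 ≤ M)
    (hWT : Tendsto (fun x => ℙ.real {ω | W ω > x - M * f x} / T x) atTop (𝓝 k)) :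
    Tendsto (fun x => ℙ.real {ω | |Z ω| > t * f x ∧ W ω > x - M * f x} / T x)
      atTop (𝓝 0) := by
  have hhalf := ((h (t / 2) (half_pos ht)).comp (hT.tendsto_sub_mul_atTop M)).div_mul_div hWT
    fun x hx => le_antisymm (hx ▸ measureReal_mono fun ω hω => hω.2) measureReal_nonneg
  rw [zero_mul] at hhalf
  refine squeeze_zero' (Eventually.of_forall fun x => div_nonneg measureReal_nonneg
    (hT.pos x).le) ?_ hhalf
  filter_upwards [hT.eventually_le_two_mul hf hM] with x hx
  refine div_le_div_of_nonneg_right (measureReal_mono fun ω hω => ⟨?_, hω.2⟩) (hT.pos x).le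
  exact lt_of_le_of_lt (by nlinarith) hω.1

theorem measureReal_add_gt_le [IsFiniteMeasure ℙ] (X Y : Ω → ℝ) (x r l : ℝ) :
    ℙ.real {ω | X ω + Y ω > x} ≤ ℙ.real {ω | X ω > x - r} + ℙ.real {ω | Y ω > x - r}
      + ℙ.real {ω | |Y ω| > r ∧ X ω > x - l} + ℙ.real {ω | |X ω| > r ∧ Y ω > x - l}
      + ℙ.real {ω | Y ω > l ∧ X ω > l} := by
  have hcover : {ω | X ω + Y ω > x} ⊆ {ω | X ω > x - r} ∪ {ω | Y ω > x - r}
      ∪ {ω | |Y ω| > r ∧ X ω > x - l} ∪ {ω | |X ω| > r ∧ Y ω > x - l}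
      ∪ {ω | Y ω > l ∧ X ω > l} := by
    intro ω hω
    simp only [Set.mem_ofPred_eq, Set.mem_union] at hω ⊢
    rcases le_or_gt |Y ω| r with hY | hY
    · have := (abs_le.1 hY).2; left; left; left; left; linarith
    rcases le_or_gt |X ω| r with hX | hX
    · have := (abs_le.1 hX).2; left; left; left; right; linarith
    rcases le_or_gt (Y ω) l with hYl | hYl
    · left; left; right; exact ⟨hY, by linarith⟩
    rcases le_or_gt (X ω) l with hXl | hXl
    · left; right; exact ⟨hX, by linarith⟩
    · right; exact ⟨hYl, hXl⟩
  refine (measureReal_mono hcover).trans ?_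
  refine (measureReal_union_le _ _).trans (add_le_add_left ?_ _)
  refine (measureReal_union_le _ _).trans (add_le_add_left ?_ _)
  refine (measureReal_union_le _ _).trans (add_le_add_left ?_ _)
  exact measureReal_union_le _ _

/-- Split `{X + Y > x}` by the measurable event `{X > x + r}`. -/
theorem le_measureReal_add_gt [IsFiniteMeasure ℙ] {X : Ω → ℝ} (hX : Measurable X) (Y : Ω → ℝ)
    {x r : ℝ} (hx : 0 ≤ x) (hr : 0 ≤ r) :
    ℙ.real {ω | X ω > x + r} + ℙ.real {ω | Y ω > x + r} - ℙ.real {ω | |Y ω| > r ∧ X ω > x}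
      - ℙ.real {ω | |X ω| > r ∧ Y ω > x} ≤ ℙ.real {ω | X ω + Y ω > x} := by
  set S := {ω | X ω + Y ω > x}
  set E := {ω | X ω > x + r}
  have hsplit : ℙ.real (S ∩ E) + ℙ.real (S \ E) = ℙ.real S :=
    measureReal_inter_add_sdiff (measurableSet_lt measurable_const hX)
  have hXbig : ℙ.real E ≤ ℙ.real (S ∩ E) + ℙ.real {ω | |Y ω| > r ∧ X ω > x} := by
    refine (measureReal_mono fun ω (hω : X ω > x + r) => ?_).trans (measureReal_union_le _ _)
    rcases le_or_gt |Y ω| r with hY | hY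
    · have := (abs_le.1 hY).1
      exact Or.inl ⟨show X ω + Y ω > x by linarith, hω⟩
    · exact Or.inr ⟨hY, show X ω > x by linarith⟩
  have hYbig : ℙ.real {ω | Y ω > x + r} ≤ ℙ.real (S \ E) + ℙ.real {ω | |X ω| > r ∧ Y ω > x} := by
    refine (measureReal_mono fun ω (hω : Y ω > x + r) => ?_).trans (measureReal_union_le _ _)
    rcases le_or_gt |X ω| r with hX | hX
    · obtain ⟨hX₁, hX₂⟩ := abs_le.1 hX
      exact Or.inl ⟨show X ω + Y ω > x by linarith, show ¬ X ω > x + r by linarith⟩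
    · exact Or.inr ⟨hX, show Y ω > x by linarith⟩
  linarith

theorem gumbelTail_of_mda [IsProbabilityMeasure ℙ] {X : Ω → ℝ} (hX : Measurable X)
    {F f : ℝ → ℝ} (hF : ∀ x, F x = ℙ.real {ω | X ω ≤ x}) (hend : ∀ x, F x < 1)
    (hMDA : ∀ s : ℝ, Tendsto (fun x => (1 - F (x + s * f x)) / (1 - F x)) atTop (𝓝 (exp (-s)))) :
    GumbelTail (fun u => ℙ.real {ω | X ω > u}) f := by
  have htail : ∀ u, ℙ.real {ω | X ω > u} = 1 - F u := fun u => by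
    rw [hF, ← probReal_compl_eq_one_sub (measurableSet_le hX measurable_const)]
    congr 1
    ext ω
    simp
  have hanti : Antitone fun u => {ω | X ω > u} := fun a b hab ω (hω : X ω > b) =>
    show X ω > a from hab.trans_lt hω
  refine ⟨fun u => by rw [htail]; linarith [hend u], fun a b hab => measureReal_mono (hanti hab),
    ?_, fun s => by simpa only [htail] using hMDA s⟩
  have hempty : ⋂ u : ℝ, {ω | X ω > u} = ∅ :=
    Set.eq_empty_of_forall_notMem fun ω hω => lt_irrefl (X ω) (Set.mem_iInter.1 hω (X ω))
  have hlim := tendsto_measure_iInter_atTop (μ := ℙ)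
    (fun u => (measurableSet_lt measurable_const hX).nullMeasurableSet) hanti
    ⟨0, measure_ne_top _ _⟩
  rw [hempty, measure_empty] at hlim
  exact (ENNReal.tendsto_toReal ENNReal.zero_ne_top).comp hlim

variable [IsFiniteMeasure ℙ] {X Y : Ω → ℝ} {f : ℝ → ℝ} {c t : ℝ}

theorem tendsto_lower_bound (hT : GumbelTail (fun u => ℙ.real {ω | X ω > u}) f)
    (hratio : Tendsto (fun x => ℙ.real {ω | Y ω > x} / ℙ.real {ω | X ω > x}) atTop (𝓝 c))
    (hY : TailNegligible ℙ Y X f) (hX : TailNegligible ℙ X Y f) (ht : 0 < t) :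
    Tendsto (fun x => (ℙ.real {ω | X ω > x + t * f x} + ℙ.real {ω | Y ω > x + t * f x}
      - ℙ.real {ω | |Y ω| > t * f x ∧ X ω > x} - ℙ.real {ω | |X ω| > t * f x ∧ Y ω > x})
      / ℙ.real {ω | X ω > x}) atTop (𝓝 ((1 + c) * exp (-t))) := by
  have hG := tendsto_comp_div_of_tendsto_div hT.pos hT.antitone hT.tendsto_zero hratio
    (hT.tendsto_ratio t)
  have hXY := (hX t ht).div_mul_div hratio
    fun x hx => le_antisymm (hx ▸ measureReal_mono fun ω hω => hω.2) measureReal_nonneg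
  have hsum := (((hT.tendsto_ratio t).add hG).sub (hY t ht)).sub hXY
  simp only [add_div, sub_div]
  convert hsum using 2
  ring

theorem tendsto_upper_bound {L : ℝ} (hT : GumbelTail (fun u => ℙ.real {ω | X ω > u}) f)
    (hf : ∀ x, 0 < f x)
    (hratio : Tendsto (fun x => ℙ.real {ω | Y ω > x} / ℙ.real {ω | X ω > x}) atTop (𝓝 c))
    (hY : TailNegligible ℙ Y X f) (hX : TailNegligible ℙ X Y f)
    (hjoint : Tendsto (fun x => ℙ.real {ω | Y ω > L * f x ∧ X ω > L * f x}
      / ℙ.real {ω | X ω > x}) atTop (𝓝 0)) (ht : 0 < t) (hL : 0 ≤ L) :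
    Tendsto (fun x => (ℙ.real {ω | X ω > x - t * f x} + ℙ.real {ω | Y ω > x - t * f x}
      + ℙ.real {ω | |Y ω| > t * f x ∧ X ω > x - L * f x}
      + ℙ.real {ω | |X ω| > t * f x ∧ Y ω > x - L * f x}
      + ℙ.real {ω | Y ω > L * f x ∧ X ω > L * f x}) / ℙ.real {ω | X ω > x})
      atTop (𝓝 ((1 + c) * exp t)) := by
  have hG (M : ℝ) := tendsto_comp_div_of_tendsto_div hT.pos hT.antitone hT.tendsto_zero hratio
    (hT.tendsto_sub_ratio M)
  have hsum := ((((hT.tendsto_sub_ratio t).add (hG t)).add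
    (hY.tendsto_sub_div hT hf ht hL (hT.tendsto_sub_ratio L))).add
    (hX.tendsto_sub_div hT hf ht hL (hG L))).add hjoint
  simp only [add_div]
  convert hsum using 2
  ring

end Probability

theorem stmt_3_general {Ω : Type*} [MeasurableSpace Ω] (ℙ : Measure Ω) [IsProbabilityMeasure ℙ]
    (X Y : Ω → ℝ) (hXm : Measurable X)
    (F f : ℝ → ℝ) (c : ℝ)
    (hF : ∀ x, F x = (ℙ {ω | X ω ≤ x}).toReal)
    (hend : ∀ x, F x < 1)
    (hfpos : ∀ x, 0 < f x)
    (hMDA : ∀ x : ℝ, Tendsto (fun t => (1 - F (t + x * f t)) / (1 - F t))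
      atTop (nhds (Real.exp (-x))))
    (hratio : Tendsto (fun x =>
      (ℙ {ω | Y ω > x}).toReal / (ℙ {ω | X ω > x}).toReal) atTop (nhds c))
    (hcondY : ∀ t > (0:ℝ), Tendsto (fun x =>
      (ℙ {ω | |Y ω| > t * f x ∧ X ω > x}).toReal / (ℙ {ω | X ω > x}).toReal)
      atTop (nhds 0))
    (hcondX : ∀ t > (0:ℝ), Tendsto (fun x =>
      (ℙ {ω | |X ω| > t * f x ∧ Y ω > x}).toReal / (ℙ {ω | Y ω > x}).toReal)
      atTop (nhds 0))
    (hjoint : ∃ L > (0:ℝ), Tendsto (fun x =>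
      (ℙ {ω | Y ω > L * f x ∧ X ω > L * f x}).toReal / (ℙ {ω | X ω > x}).toReal)
      atTop (nhds 0)) :
    Tendsto (fun x =>
      (ℙ {ω | X ω + Y ω > x}).toReal / (ℙ {ω | X ω > x}).toReal)
      atTop (nhds (1 + c)) := by
  obtain ⟨L, hL, hjoint⟩ := hjoint
  have hT := gumbelTail_of_mda hXm hF hend hMDA
  have hexp : Continuous fun t => (1 + c) * exp t := by fun_prop
  refine tendsto_of_forall_pos_bounds (lo := fun t => (1 + c) * exp (-t))
    (hi := fun t => (1 + c) * exp t) ?_ ?_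
    (fun t ht => ⟨_, ?_, tendsto_lower_bound hT hratio hcondY hcondX ht⟩)
    (fun t ht => ⟨_, ?_, tendsto_upper_bound hT hfpos hratio hcondY hcondX hjoint ht hL.le⟩)
  · simpa [Function.comp_def] using
      ((hexp.comp continuous_neg).tendsto 0).mono_left nhdsWithin_le_nhds
  · simpa using (hexp.tendsto 0).mono_left nhdsWithin_le_nhds
  · filter_upwards [eventually_ge_atTop 0] with x hx
    exact div_le_div_of_nonneg_right
      (le_measureReal_add_gt hXm Y hx (mul_pos ht (hfpos x)).le) (hT.pos x).le
  · exact Eventually.of_forall fun x =>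
      div_le_div_of_nonneg_right (measureReal_add_gt_le X Y x _ _) (hT.pos x).le

/-- Main tail-equivalence theorem: under Assumptions 1–5,
`P(X + Y > x) ∼ (1 + c) P(X > x)` as `x → ∞`. -/
theorem stmt_3 {Ω : Type*} [MeasurableSpace Ω] (ℙ : Measure Ω) [IsProbabilityMeasure ℙ]
    (X Y : Ω → ℝ) (hXm : Measurable X) (hYm : Measurable Y)
    (F f : ℝ → ℝ) (c : ℝ) (hc : 0 ≤ c)
    (hF : ∀ x, F x = (ℙ {ω | X ω ≤ x}).toReal)
    (hend : ∀ x, F x < 1)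
    (hfpos : ∀ x, 0 < f x)
    (hself : ∀ x : ℝ, Tendsto (fun t => f (t + x * f t) / f t) atTop (nhds 1))
    (hMDA : ∀ x : ℝ, Tendsto (fun t => (1 - F (t + x * f t)) / (1 - F t))
      atTop (nhds (Real.exp (-x))))
    (hratio : Tendsto (fun x =>
      (ℙ {ω | Y ω > x}).toReal / (ℙ {ω | X ω > x}).toReal) atTop (nhds c))
    (hcondY : ∀ t > (0:ℝ), Tendsto (fun x =>
      (ℙ {ω | |Y ω| > t * f x ∧ X ω > x}).toReal / (ℙ {ω | X ω > x}).toReal)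
      atTop (nhds 0))
    (hcondX : ∀ t > (0:ℝ), Tendsto (fun x =>
      (ℙ {ω | |X ω| > t * f x ∧ Y ω > x}).toReal / (ℙ {ω | Y ω > x}).toReal)
      atTop (nhds 0))
    (hjoint : ∃ L > (0:ℝ), Tendsto (fun x =>
      (ℙ {ω | Y ω > L * f x ∧ X ω > L * f x}).toReal / (ℙ {ω | X ω > x}).toReal)
      atTop (nhds 0)) :
    Tendsto (fun x =>
      (ℙ {ω | X ω + Y ω > x}).toReal / (ℙ {ω | X ω > x}).toReal)
      atTop (nhds (1 + c)) :=
  stmt_3_general ℙ X Y hXm F f c hF hend hfpos hMDA hratio hcondY hcondX hjoint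
end

section
/- Under assumptions (1)–(3) of Theorem on tail equivalence (X has distribution F ∈ MDA(Λ) with infinite right endpoint and auxiliary function f; lim P(Y>x)/P(X>x)=c ∈ (0,∞); for all t>0, P(|Y|>tf(x)|X>x)→0), the pair (X,Y) is asymptotically independent: with b_F(t) = inf{s : 1/(1-F(s)) ≥ t} and b_G(t) defined analogously for the distribution G of Y, lim_{t→∞} P(X > b_F(t), Y > b_G(t))/P(X > b_F(t)) = 0. -/
open MeasureTheory Filter Real

/-!
Write `T = 1 - F` and `S = 1 - G`. Choosing `u` with `exp (-u) < c / 2`, the Gumbel limit and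
`f(y) = o(y)` give, for large `y`,
`T (2y) ≤ T (y + u f(y)) < (c / 2) T(y) < S(y)`.
Transferred to the generalized inverses this yields `b_F(t) / 3 ≤ b_G(t)` eventually, hence
`f(b_F(t)) < b_G(t)` eventually. Then `{X > b_F(t), Y > b_G(t)} ⊆ {|Y| > f(b_F(t)), X > b_F(t)}`,
whose probability relative to `P(X > b_F(t))` tends to `0` by the third assumption.
-/

/-- `tailQuantile (fun s => 1 - F s)` is the paper's `b_F`. -/
noncomputable def tailQuantile (T : ℝ → ℝ) (t : ℝ) : ℝ :=
  sInf {s | 1 / T s ≥ t}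

section TailQuantile

variable {T S : ℝ → ℝ}

lemma lt_of_le_one_div_tail (hT : Antitone T) {M s t : ℝ} (hM : 0 < T M) (hMt : 1 / T M < t)
    (hs : t ≤ 1 / T s) : M < s := by
  by_contra! h
  have : 1 / T s ≤ 1 / T M := one_div_le_one_div_of_le hM (hT h)
  linarith

lemma nonempty_setOf_le_one_div_tail (hpos : ∀ᶠ s in atTop, 0 < T s)
    (h0 : Tendsto T atTop (nhds 0)) (t : ℝ) : {s | 1 / T s ≥ t}.Nonempty := by
  have hmax : 0 < max t 1 := lt_max_of_lt_right one_pos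
  obtain ⟨s, hs, hsmall⟩ :=
    (hpos.and (h0.eventually (gt_mem_nhds (one_div_pos.2 hmax)))).exists
  exact ⟨s, (le_max_left t 1).trans ((le_one_div hmax hs).2 hsmall.le)⟩

lemma le_tailQuantile (hT : Antitone T) (hpos : ∀ᶠ s in atTop, 0 < T s)
    (h0 : Tendsto T atTop (nhds 0)) {M t : ℝ} (hM : 0 < T M) (hMt : 1 / T M < t) :
    M ≤ tailQuantile T t :=
  le_csInf (nonempty_setOf_le_one_div_tail hpos h0 t) fun _ hs =>
    (lt_of_le_one_div_tail hT hM hMt hs).le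

lemma one_div_lt_of_lt_tailQuantile (hT : Antitone T) {M s t : ℝ} (hM : 0 < T M)
    (hMt : 1 / T M < t) (hs : s < tailQuantile T t) : 1 / T s < t := by
  by_contra! h
  exact hs.not_ge (csInf_le ⟨M, fun _ hr => (lt_of_le_one_div_tail hT hM hMt hr).le⟩ h)

lemma tendsto_tailQuantile_atTop (hT : Antitone T) (hpos : ∀ s, 0 < T s)
    (h0 : Tendsto T atTop (nhds 0)) : Tendsto (tailQuantile T) atTop atTop :=
  tendsto_atTop.2 fun M => (eventually_gt_atTop (1 / T M)).mono fun _ ht =>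
    le_tailQuantile hT (Eventually.of_forall hpos) h0 (hpos M) ht

lemma eventually_tailQuantile_div_three_le (hT : Antitone T) (hTpos : ∀ s, 0 < T s)
    (hT0 : Tendsto T atTop (nhds 0)) (hS : Antitone S) (hSpos : ∀ᶠ s in atTop, 0 < S s)
    (hS0 : Tendsto S atTop (nhds 0)) (hTS : ∀ᶠ y in atTop, T (2 * y) ≤ S y) :
    ∀ᶠ t in atTop, tailQuantile T t / 3 ≤ tailQuantile S t := by
  have hb := tendsto_tailQuantile_atTop hT hTpos hT0
  filter_upwards [(hb.atTop_div_const three_pos).eventually hTS,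
    hb.eventually (eventually_gt_atTop 0), eventually_gt_atTop (1 / T 0)] with t hTSt hbpos ht
  -- `1 / T < t` is only guaranteed strictly below the infimum, hence `/ 3` rather than `/ 2`.
  have h2m : 2 * (tailQuantile T t / 3) < tailQuantile T t := by linarith
  have hTt := one_div_lt_of_lt_tailQuantile hT (hTpos 0) ht h2m
  exact le_tailQuantile hS hSpos hS0 ((hTpos _).trans_le hTSt)
    ((one_div_le_one_div_of_le (hTpos _) hTSt).trans_lt hTt)

end TailQuantile

lemma eventually_tail_two_mul_le {T S f : ℝ → ℝ} {c : ℝ} (hT : Antitone T)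
    (hTpos : ∀ y, 0 < T y) (hf : Tendsto (fun y => f y / y) atTop (nhds 0))
    (hMDA : ∀ x : ℝ, Tendsto (fun y => T (y + x * f y) / T y) atTop (nhds (exp (-x))))
    (hc : 0 < c) (hST : Tendsto (fun y => S y / T y) atTop (nhds c)) :
    ∀ᶠ y in atTop, T (2 * y) ≤ S y := by
  obtain ⟨u, hu⟩ : ∃ u, exp (-u) < c / 2 :=
    (tendsto_exp_neg_atTop_nhds_zero.eventually (gt_mem_nhds (half_pos hc))).exists
  have hshift : ∀ᶠ y in atTop, u * (f y / y) < 1 := by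
    have : Tendsto (fun y => u * (f y / y)) atTop (nhds 0) := by
      simpa only [mul_zero] using hf.const_mul u
    exact this.eventually (gt_mem_nhds one_pos)
  filter_upwards [hshift, eventually_gt_atTop 0, (hMDA u).eventually (gt_mem_nhds hu),
    hST.eventually (lt_mem_nhds (half_lt_self hc))] with y hshift hy hTu hSc
  rw [← mul_div_assoc, div_lt_one hy] at hshift
  calc T (2 * y) ≤ T (y + u * f y) := hT (by linarith)
    _ ≤ c / 2 * T y := ((div_lt_iff₀ (hTpos y)).1 hTu).le
    _ ≤ S y := ((lt_div_iff₀ (hTpos y)).1 hSc).le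

section Measure

variable {Ω : Type*} [MeasurableSpace Ω] (ℙ : Measure Ω)

lemma antitone_one_sub_measure_le [IsFiniteMeasure ℙ] (Z : Ω → ℝ) :
    Antitone fun x => 1 - (ℙ {ω | Z ω ≤ x}).toReal := fun _ _ hab =>
  sub_le_sub_left (ENNReal.toReal_mono (measure_ne_top _ _)
    (measure_mono fun _ h => le_trans h hab)) 1

lemma tendsto_one_sub_measure_le_atTop [IsProbabilityMeasure ℙ] (Z : Ω → ℝ) :
    Tendsto (fun x => 1 - (ℙ {ω | Z ω ≤ x}).toReal) atTop (nhds 0) := by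
  have hunion : (⋃ x : ℝ, {ω | Z ω ≤ x}) = Set.univ :=
    Set.eq_univ_of_forall fun ω => Set.mem_iUnion.2 ⟨Z ω, le_refl (Z ω)⟩
  have h := tendsto_measure_iUnion_atTop (μ := ℙ)
    (fun _ _ hab _ h => le_trans h hab : Monotone fun x : ℝ => {ω | Z ω ≤ x})
  rw [hunion, measure_univ] at h
  simpa only [ENNReal.toReal_one, sub_self, Function.comp_def] using
    (tendsto_const_nhds (x := (1:ℝ))).sub ((ENNReal.tendsto_toReal ENNReal.one_ne_top).comp h)

lemma tendsto_measure_div_of_eventually_subset [IsFiniteMeasure ℙ] {ι : Type*} {l : Filter ι}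
    {A B C : ι → Set Ω} (hAB : ∀ᶠ i in l, A i ⊆ B i)
    (hB : Tendsto (fun i => (ℙ (B i)).toReal / (ℙ (C i)).toReal) l (nhds 0)) :
    Tendsto (fun i => (ℙ (A i)).toReal / (ℙ (C i)).toReal) l (nhds 0) :=
  tendsto_of_tendsto_of_tendsto_of_le_of_le' tendsto_const_nhds hB
    (Eventually.of_forall fun _ => div_nonneg ENNReal.toReal_nonneg ENNReal.toReal_nonneg)
    (hAB.mono fun _ h => div_le_div_of_nonneg_right
      (ENNReal.toReal_mono (measure_ne_top _ _) (measure_mono h)) ENNReal.toReal_nonneg)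

end Measure

theorem stmt_4_general {Ω : Type*} [MeasurableSpace Ω] (ℙ : Measure Ω) [IsProbabilityMeasure ℙ]
    (X Y : Ω → ℝ)
    (F G f : ℝ → ℝ) (c : ℝ) (hc : 0 < c)
    (hF : ∀ x, F x = (ℙ {ω | X ω ≤ x}).toReal)
    (hG : ∀ x, G x = (ℙ {ω | Y ω ≤ x}).toReal)
    (hend : ∀ x, F x < 1)
    (hfx : Tendsto (fun x => f x / x) atTop (nhds 0))
    (hMDA : ∀ x : ℝ, Tendsto (fun t => (1 - F (t + x * f t)) / (1 - F t))
      atTop (nhds (Real.exp (-x))))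
    (hratio : Tendsto (fun x => (1 - G x) / (1 - F x)) atTop (nhds c))
    (hcond : ∀ t > (0:ℝ), Tendsto (fun x =>
      (ℙ {ω | |Y ω| > t * f x ∧ X ω > x}).toReal / (ℙ {ω | X ω > x}).toReal)
      atTop (nhds 0))
    (bF bG : ℝ → ℝ)
    (hbF : ∀ t, bF t = sInf {s : ℝ | 1 / (1 - F s) ≥ t})
    (hbG : ∀ t, bG t = sInf {s : ℝ | 1 / (1 - G s) ≥ t}) :
    Tendsto (fun t =>
      (ℙ {ω | X ω > bF t ∧ Y ω > bG t}).toReal / (ℙ {ω | X ω > bF t}).toReal)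
      atTop (nhds 0) := by
  have hT : Antitone fun s => 1 - F s := by simpa only [hF] using antitone_one_sub_measure_le ℙ X
  have hS : Antitone fun s => 1 - G s := by simpa only [hG] using antitone_one_sub_measure_le ℙ Y
  have hT0 : Tendsto (fun s => 1 - F s) atTop (nhds 0) := by
    simpa only [hF] using tendsto_one_sub_measure_le_atTop ℙ X
  have hS0 : Tendsto (fun s => 1 - G s) atTop (nhds 0) := by
    simpa only [hG] using tendsto_one_sub_measure_le_atTop ℙ Y
  have hTpos : ∀ s, 0 < 1 - F s := fun s => sub_pos.2 (hend s)
  have hSpos : ∀ᶠ s in atTop, 0 < 1 - G s := (hratio.eventually (lt_mem_nhds hc)).mono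
    fun s hs => (div_pos_iff_of_pos_right (hTpos s)).1 hs
  have hbF_eq : bF = tailQuantile fun s => 1 - F s := funext hbF
  have hbG_eq : bG = tailQuantile fun s => 1 - G s := funext hbG
  have hbF_top : Tendsto bF atTop atTop := hbF_eq ▸ tendsto_tailQuantile_atTop hT hTpos hT0
  have hbG_ge : ∀ᶠ t in atTop, bF t / 3 ≤ bG t := hbF_eq ▸ hbG_eq ▸
    eventually_tailQuantile_div_three_le hT hTpos hT0 hS hSpos hS0
      (eventually_tail_two_mul_le hT hTpos hfx hMDA hc hratio)
  have hf_lt : ∀ᶠ t in atTop, f (bF t) < bG t := by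
    filter_upwards [hbF_top.eventually (hfx.eventually (gt_mem_nhds (one_div_pos.2 three_pos))),
      hbF_top.eventually (eventually_gt_atTop 0), hbG_ge] with t hf hpos hbG
    linarith [(div_lt_iff₀ hpos).1 hf]
  refine tendsto_measure_div_of_eventually_subset ℙ ?_ ((hcond 1 one_pos).comp hbF_top)
  filter_upwards [hf_lt] with t ht ω ⟨hX, hY⟩
  exact ⟨(one_mul (f _)).symm ▸ ht.trans (hY.trans_le (le_abs_self _)), hX⟩

/-- Under Assumptions 1–3 with `c ∈ (0,∞)`, the pair `(X,Y)` is asymptotically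
independent: `P(X > b_F(t), Y > b_G(t))/P(X > b_F(t)) → 0` where `b_F, b_G` are the
generalized inverses of `1/(1-F)`, `1/(1-G)`. -/
theorem stmt_4 {Ω : Type*} [MeasurableSpace Ω] (ℙ : Measure Ω) [IsProbabilityMeasure ℙ]
    (X Y : Ω → ℝ) (hXm : Measurable X) (hYm : Measurable Y)
    (F G f : ℝ → ℝ) (c : ℝ) (hc : 0 < c)
    (hF : ∀ x, F x = (ℙ {ω | X ω ≤ x}).toReal)
    (hG : ∀ x, G x = (ℙ {ω | Y ω ≤ x}).toReal)
    (hend : ∀ x, F x < 1)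
    (hfpos : ∀ x, 0 < f x)
    (hfx : Tendsto (fun x => f x / x) atTop (nhds 0))
    (hMDA : ∀ x : ℝ, Tendsto (fun t => (1 - F (t + x * f t)) / (1 - F t))
      atTop (nhds (Real.exp (-x))))
    (hratio : Tendsto (fun x => (1 - G x) / (1 - F x)) atTop (nhds c))
    (hcond : ∀ t > (0:ℝ), Tendsto (fun x =>
      (ℙ {ω | |Y ω| > t * f x ∧ X ω > x}).toReal / (ℙ {ω | X ω > x}).toReal)
      atTop (nhds 0))
    (bF bG : ℝ → ℝ)
    (hbF : ∀ t, bF t = sInf {s : ℝ | 1 / (1 - F s) ≥ t})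
    (hbG : ∀ t, bG t = sInf {s : ℝ | 1 / (1 - G s) ≥ t}) :
    Tendsto (fun t =>
      (ℙ {ω | X ω > bF t ∧ Y ω > bG t}).toReal / (ℙ {ω | X ω > bF t}).toReal)
      atTop (nhds 0) :=
  stmt_4_general ℙ X Y F G f c hc hF hG hend hfx hMDA hratio hcond bF bG hbF hbG
end

section
/- If X and Y are nonnegative random variables, X has distribution F ∈ MDA(Λ) with auxiliary function f and infinite right endpoint, and for every L > 0, P(X > L f(x), Y > L f(x))/P(X > x) → 0 as x → ∞, then for every t > 0, P(Y > t f(x) | X > x) → 0 as x → ∞. -/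
open MeasureTheory Filter

/-! Since `f x = o(x)`, eventually `t f(x) < x`, so the event `{Y > t f(x), X > x}` is contained
in the joint-exceedance event `{X > t f(x), Y > t f(x)}`; the hypothesis with `L = t` then squeezes
the conditional probability to `0`. -/

lemma eventually_const_mul_lt_self {f : ℝ → ℝ} (hfx : Tendsto (fun x => f x / x) atTop (nhds 0))
    (t : ℝ) : ∀ᶠ x in atTop, t * f x < x := by
  have hlim : Tendsto (fun x => t * (f x / x)) atTop (nhds 0) := by
    simpa using hfx.const_mul t
  filter_upwards [hlim.eventually (eventually_lt_nhds one_pos), eventually_gt_atTop 0]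
    with x hx hx0
  rwa [← mul_div_assoc, div_lt_one hx0] at hx

lemma toReal_measure_and_gt_le_joint {Ω : Type*} [MeasurableSpace Ω] (μ : Measure Ω)
    [IsFiniteMeasure μ] (X Y : Ω → ℝ) {a x : ℝ} (hax : a < x) :
    (μ {ω | Y ω > a ∧ X ω > x}).toReal ≤ (μ {ω | X ω > a ∧ Y ω > a}).toReal :=
  ENNReal.toReal_mono (measure_ne_top _ _)
    (measure_mono fun _ hω => ⟨hax.trans hω.2, hω.1⟩)

theorem stmt_5_general {Ω : Type*} [MeasurableSpace Ω] (ℙ : Measure Ω) [IsProbabilityMeasure ℙ]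
    (X Y : Ω → ℝ)
    (f : ℝ → ℝ)
    (hfx : Tendsto (fun x => f x / x) atTop (nhds 0))
    (hjoint : ∀ L > (0:ℝ), Tendsto (fun x =>
      (ℙ {ω | X ω > L * f x ∧ Y ω > L * f x}).toReal / (ℙ {ω | X ω > x}).toReal)
      atTop (nhds 0)) :
    ∀ t > (0:ℝ), Tendsto (fun x =>
      (ℙ {ω | Y ω > t * f x ∧ X ω > x}).toReal / (ℙ {ω | X ω > x}).toReal)
      atTop (nhds 0) := by
  intro t ht
  have hbound : ∀ᶠ x in atTop,
      (ℙ {ω | Y ω > t * f x ∧ X ω > x}).toReal / (ℙ {ω | X ω > x}).toReal ≤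
      (ℙ {ω | X ω > t * f x ∧ Y ω > t * f x}).toReal / (ℙ {ω | X ω > x}).toReal := by
    filter_upwards [eventually_const_mul_lt_self hfx t] with x hx
    exact div_le_div_of_nonneg_right (toReal_measure_and_gt_le_joint ℙ X Y hx)
      ENNReal.toReal_nonneg
  exact squeeze_zero' (Eventually.of_forall fun _ => by positivity) hbound (hjoint t ht)

/-- For nonnegative risks, if the joint-tail condition holds for every `L > 0`, then
the conditional-tail condition holds: `P(Y > t f(x) | X > x) → 0` for every `t > 0`. -/
theorem stmt_5 {Ω : Type*} [MeasurableSpace Ω] (ℙ : Measure Ω) [IsProbabilityMeasure ℙ]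
    (X Y : Ω → ℝ) (hXm : Measurable X) (hYm : Measurable Y)
    (hXnn : ∀ ω, 0 ≤ X ω) (hYnn : ∀ ω, 0 ≤ Y ω)
    (F f : ℝ → ℝ)
    (hF : ∀ x, F x = (ℙ {ω | X ω ≤ x}).toReal)
    (hend : ∀ x, F x < 1)
    (hfpos : ∀ x, 0 < f x)
    (hfx : Tendsto (fun x => f x / x) atTop (nhds 0))
    (hMDA : ∀ x : ℝ, Tendsto (fun t => (1 - F (t + x * f t)) / (1 - F t))
      atTop (nhds (Real.exp (-x))))
    (hjoint : ∀ L > (0:ℝ), Tendsto (fun x =>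
      (ℙ {ω | X ω > L * f x ∧ Y ω > L * f x}).toReal / (ℙ {ω | X ω > x}).toReal)
      atTop (nhds 0)) :
    ∀ t > (0:ℝ), Tendsto (fun x =>
      (ℙ {ω | Y ω > t * f x ∧ X ω > x}).toReal / (ℙ {ω | X ω > x}).toReal)
      atTop (nhds 0) :=
  stmt_5_general ℙ X Y f hfx hjoint
end

section
/- Let U ~ Uniform(0,1), X = -log U and Y = -log(1-U), so X and Y are standard Exponential(1) with auxiliary function f ≡ 1. Then P(X + Y > x) ∼ 2 P(X > x) = 2 e^{-x} as x → ∞. -/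
open MeasureTheory Filter Real

/-!
Since `X + Y = -log (U (1 - U))`, the event `X + Y > x` is `U (1 - U) < t` with `t = e^{-x}`,
i.e. `U` lies within `(1 - √(1 - 4t)) / 2` of an endpoint of `(0, 1)`. Its probability
`1 - √(1 - 4t) = 4t / (1 + √(1 - 4t))` is `2t (1 + o(1))` as `t → 0`.
-/

open Set Topology

lemma setOf_lt_neg_log_inter_Ioo {x : ℝ} (hx : 0 ≤ x) :
    {u : ℝ | x < -log u} ∩ Ioo 0 1 = Ioo 0 (exp (-x)) := by
  ext u
  simp only [mem_inter_iff, mem_ofPred_eq, mem_Ioo]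
  constructor
  · rintro ⟨h, hu0, -⟩
    exact ⟨hu0, (log_lt_iff_lt_exp hu0).1 (by linarith)⟩
  · rintro ⟨hu0, hu⟩
    have : exp (-x) ≤ 1 := exp_le_one_iff.2 (neg_nonpos.2 hx)
    exact ⟨by linarith [(log_lt_iff_lt_exp hu0).2 hu], hu0, by linarith⟩

lemma setOf_lt_neg_log_add_neg_log_one_sub_inter_Ioo (x : ℝ) :
    {u : ℝ | x < -log u + -log (1 - u)} ∩ Ioo 0 1 =
      {u | u * (1 - u) < exp (-x)} ∩ Ioo 0 1 := by
  ext u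
  simp only [mem_inter_iff, mem_ofPred_eq, mem_Ioo, and_congr_left_iff, and_imp]
  intro hu0 hu1
  rw [← log_lt_iff_lt_exp (by nlinarith), log_mul hu0.ne' (by linarith)]
  constructor <;> intro h <;> linarith

lemma setOf_mul_one_sub_lt_inter_Ioo {t : ℝ} (ht : t ≤ 1 / 4) :
    {u : ℝ | u * (1 - u) < t} ∩ Ioo 0 1 =
      Ioo 0 ((1 - √(1 - 4 * t)) / 2) ∪ Ioo ((1 + √(1 - 4 * t)) / 2) 1 := by
  have hs : √(1 - 4 * t) ^ 2 = 1 - 4 * t := sq_sqrt (by linarith)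
  have hs0 := sqrt_nonneg (1 - 4 * t)
  ext u
  simp only [mem_inter_iff, mem_ofPred_eq, mem_Ioo, mem_union]
  constructor
  · rintro ⟨h, hu0, hu1⟩
    by_contra! hc
    have hlo := hc.1 hu0
    have hhi : u ≤ (1 + √(1 - 4 * t)) / 2 := not_lt.1 fun h' => (hc.2 h').not_gt hu1
    nlinarith [mul_nonneg (sub_nonneg.2 hlo) (sub_nonneg.2 hhi)]
  · rintro (⟨hu0, hu⟩ | ⟨hu, hu1⟩)
    · refine ⟨by nlinarith, hu0, by linarith⟩
    · refine ⟨by nlinarith, by linarith, hu1⟩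

lemma volume_setOf_mul_one_sub_lt_inter_Ioo {t : ℝ} (ht0 : 0 ≤ t) (ht : t ≤ 1 / 4) :
    volume ({u : ℝ | u * (1 - u) < t} ∩ Ioo 0 1) = ENNReal.ofReal (1 - √(1 - 4 * t)) := by
  have hs1 : √(1 - 4 * t) ≤ 1 := sqrt_le_one.2 (by linarith)
  have hs0 := sqrt_nonneg (1 - 4 * t)
  have hdisj : Disjoint (Ioo 0 ((1 - √(1 - 4 * t)) / 2)) (Ioo ((1 + √(1 - 4 * t)) / 2) 1) :=
    disjoint_left.2 fun u hu hu' => by linarith [hu.2, hu'.1]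
  rw [setOf_mul_one_sub_lt_inter_Ioo ht, measure_union hdisj measurableSet_Ioo, volume_Ioo,
    volume_Ioo, ← ENNReal.ofReal_add (by linarith) (by linarith)]
  congr 1
  ring

lemma tendsto_one_sub_sqrt_one_sub_four_mul_div :
    Tendsto (fun t : ℝ => (1 - √(1 - 4 * t)) / (2 * t)) (𝓝[>] 0) (𝓝 1) := by
  have hcont : Tendsto (fun t : ℝ => 2 / (1 + √(1 - 4 * t))) (𝓝 0) (𝓝 1) := by
    have : ContinuousAt (fun t : ℝ => 2 / (1 + √(1 - 4 * t))) 0 := by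
      fun_prop (disch := positivity)
    convert this.tendsto
    norm_num
  refine (hcont.mono_left nhdsWithin_le_nhds).congr' ?_
  have hquarter : ∀ᶠ t in 𝓝[>] (0 : ℝ), t < 1 / 4 :=
    nhdsWithin_le_nhds (gt_mem_nhds (by norm_num))
  filter_upwards [self_mem_nhdsWithin, hquarter] with t (ht0 : 0 < t) ht
  have hs : √(1 - 4 * t) ^ 2 = 1 - 4 * t := sq_sqrt (by linarith)
  have hs0 := sqrt_nonneg (1 - 4 * t)
  field_simp
  nlinarith

section

variable {Ω : Type*} [MeasurableSpace Ω] {ℙ : Measure Ω} {U : Ω → ℝ}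
  (hU : ℙ.map U = volume.restrict (Ioo 0 1))
include hU

lemma measure_preimage_eq_volume_inter_Ioo {S : Set ℝ} (hS : MeasurableSet S) :
    ℙ (U ⁻¹' S) = volume (S ∩ Ioo 0 1) := by
  have hUm : AEMeasurable U ℙ := .of_map_ne_zero (by simp [hU])
  rw [← Measure.map_apply_of_aemeasurable hUm hS, hU, Measure.restrict_apply hS]

lemma toReal_measure_lt_neg_log {x : ℝ} (hx : 0 ≤ x) :
    (ℙ {ω | x < -log (U ω)}).toReal = exp (-x) := by
  change (ℙ (U ⁻¹' {u | x < -log u})).toReal = _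
  rw [measure_preimage_eq_volume_inter_Ioo hU (by measurability), setOf_lt_neg_log_inter_Ioo hx,
    volume_Ioo, sub_zero, ENNReal.toReal_ofReal (exp_nonneg _)]

lemma toReal_measure_lt_neg_log_add_neg_log_one_sub {x : ℝ} (hx : exp (-x) ≤ 1 / 4) :
    (ℙ {ω | x < -log (U ω) + -log (1 - U ω)}).toReal = 1 - √(1 - 4 * exp (-x)) := by
  change (ℙ (U ⁻¹' {u | x < -log u + -log (1 - u)})).toReal = _
  rw [measure_preimage_eq_volume_inter_Ioo hU (by measurability),
    setOf_lt_neg_log_add_neg_log_one_sub_inter_Ioo,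
    volume_setOf_mul_one_sub_lt_inter_Ioo (exp_nonneg _) hx,
    ENNReal.toReal_ofReal (sub_nonneg.2 (sqrt_le_one.2 (by linarith [exp_pos (-x)])))]

end

theorem stmt_7_general {Ω : Type*} [MeasurableSpace Ω] (ℙ : Measure Ω)
    (U : Ω → ℝ)
    (hU : Measure.map U ℙ = volume.restrict (Set.Ioo (0:ℝ) 1)) :
    (∀ x ≥ (0:ℝ), (ℙ {ω | -Real.log (U ω) > x}).toReal = Real.exp (-x)) ∧
    Tendsto (fun x =>
      (ℙ {ω | (-Real.log (U ω)) + (-Real.log (1 - U ω)) > x}).toReal /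
        (2 * Real.exp (-x))) atTop (nhds 1) := by
  refine ⟨fun x hx => toReal_measure_lt_neg_log hU hx, ?_⟩
  have hexp : Tendsto (fun x : ℝ => exp (-x)) atTop (𝓝[>] 0) :=
    tendsto_exp_atBot_nhdsGT.comp tendsto_neg_atTop_atBot
  refine (tendsto_one_sub_sqrt_one_sub_four_mul_div.comp hexp).congr' ?_
  have hquarter : ∀ᶠ x in atTop, exp (-x) ≤ 1 / 4 :=
    tendsto_exp_neg_atTop_nhds_zero.eventually (ge_mem_nhds (by norm_num))
  filter_upwards [hquarter] with x hx
  rw [Function.comp_apply, toReal_measure_lt_neg_log_add_neg_log_one_sub hU hx]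

/-- For `U ~ Uniform(0,1)`, `X = -log U`, `Y = -log(1-U)` are Exponential(1), and
`P(X + Y > x) ∼ 2 P(X > x) = 2 e^{-x}` as `x → ∞`. -/
theorem stmt_7 {Ω : Type*} [MeasurableSpace Ω] (ℙ : Measure Ω) [IsProbabilityMeasure ℙ]
    (U : Ω → ℝ) (hUm : Measurable U)
    (hU : Measure.map U ℙ = volume.restrict (Set.Ioo (0:ℝ) 1)) :
    (∀ x ≥ (0:ℝ), (ℙ {ω | -Real.log (U ω) > x}).toReal = Real.exp (-x)) ∧
    Tendsto (fun x =>
      (ℙ {ω | (-Real.log (U ω)) + (-Real.log (1 - U ω)) > x}).toReal /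
        (2 * Real.exp (-x))) atTop (nhds 1) :=
  stmt_7_general ℙ U hU
end

section
/- Let X₁, X₂, X₃ be i.i.d. with survival function exp(-(log x)^α) for x > 1 (α > 1), and set X = min(X₁, X₂), Y = min(X₂, X₃). Then X and Y are identically distributed with survival function exp(-2(log x)^α) for x > 1, and with auxiliary function f(x) = x/(2α(log x)^{α-1}), one has P(X > f(x), Y > f(x))/P(X > x) → 0 as x → ∞. -/
open MeasureTheory Filter Real ProbabilityTheory
open scoped Topology

/-!
By independence, `P(X > t, Y > t) = F̄(t)³` and `P(X > x) = F̄(x)²`, so the ratio equals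
`exp (2 (log x)^α - 3 (log f(x))^α)`. Since `log f(x) = log x - O(log log x)`, we have
`log f(x) / log x → 1`, hence `3 (log f(x))^α - 2 (log x)^α → ∞`.
-/

namespace ProbabilityTheory

variable {Ω ι : Type*} {mΩ : MeasurableSpace Ω} {μ : Measure Ω}

lemma IndepFun.measure_lt_min {X Y : Ω → ℝ} (h : IndepFun X Y μ) (a : ℝ) :
    μ {ω | a < min (X ω) (Y ω)} = μ {ω | a < X ω} * μ {ω | a < Y ω} := by
  have hset : {ω | a < min (X ω) (Y ω)} = X ⁻¹' Set.Ioi a ∩ Y ⁻¹' Set.Ioi a := by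
    ext ω; simp
  rw [hset]
  exact h.measure_inter_preimage_eq_mul _ _ measurableSet_Ioi measurableSet_Ioi

lemma iIndepFun.measure_forall_lt [Fintype ι] {X : ι → Ω → ℝ} (h : iIndepFun X μ) (a : ℝ) :
    μ {ω | ∀ i, a < X i ω} = ∏ i, μ {ω | a < X i ω} := by
  have hset : {ω | ∀ i, a < X i ω} = ⋂ i, X i ⁻¹' Set.Ioi a := by
    ext ω; simp
  rw [hset]
  exact h.meas_iInter fun i => ⟨Set.Ioi a, measurableSet_Ioi, rfl⟩

end ProbabilityTheory

lemma log_div_mul_log_rpow {c x : ℝ} (β : ℝ) (hc : 0 < c) (hx : 1 < x) :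
    log (x / (c * log x ^ β)) = log x - (log c + β * log (log x)) := by
  have hlog : 0 < log x := log_pos hx
  rw [log_div (by linarith) (by positivity), log_mul hc.ne' (by positivity), log_rpow hlog]

lemma tendsto_log_div_mul_log_rpow_div_log {c : ℝ} (β : ℝ) (hc : 0 < c) :
    Tendsto (fun x => log (x / (c * log x ^ β)) / log x) atTop (𝓝 1) := by
  have hlog_div : Tendsto (fun y => (log c + β * log y) / y) atTop (𝓝 0) := by
    have h := (tendsto_const_nhds (x := log c)).div_atTop tendsto_id |>.add
      ((tendsto_pow_log_div_mul_add_atTop 1 0 1 one_ne_zero).const_mul β)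
    simp only [pow_one, one_mul, add_zero, mul_zero] at h
    exact h.congr fun y => by simp only [id]; ring
  have h := (tendsto_const_nhds (x := (1 : ℝ))).sub (hlog_div.comp tendsto_log_atTop)
  rw [sub_zero] at h
  refine h.congr' ?_
  filter_upwards [eventually_gt_atTop 1] with x hx
  rw [Function.comp_apply, log_div_mul_log_rpow β hc hx, sub_div, div_self (log_pos hx).ne']

lemma tendsto_atTop_of_div_tendsto_one {ι : Type*} {l : Filter ι} {u v : ι → ℝ}
    (hv : Tendsto v l atTop) (h : Tendsto (fun x => u x / v x) l (𝓝 1)) :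
    Tendsto u l atTop := by
  refine (h.pos_mul_atTop one_pos hv).congr' ?_
  filter_upwards [hv.eventually_ne_atTop 0] with x hx
  exact div_mul_cancel₀ _ hx

lemma tendsto_div_mul_log_rpow_atTop {c : ℝ} (β : ℝ) (hc : 0 < c) :
    Tendsto (fun x => x / (c * log x ^ β)) atTop atTop := by
  refine (tendsto_exp_atTop.comp (tendsto_atTop_of_div_tendsto_one tendsto_log_atTop
    (tendsto_log_div_mul_log_rpow_div_log β hc))).congr' ?_
  filter_upwards [eventually_gt_atTop 1] with x hx
  have hlog : 0 < log x := log_pos hx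
  exact exp_log (by positivity)

lemma tendsto_mul_rpow_sub_mul_rpow_atTop {ι : Type*} {l : Filter ι} {u v : ι → ℝ} {p a b : ℝ}
    (hp : 0 < p) (hab : b < a) (hv : Tendsto v l atTop)
    (h : Tendsto (fun x => u x / v x) l (𝓝 1)) :
    Tendsto (fun x => a * u x ^ p - b * v x ^ p) l atTop := by
  have hcoef : Tendsto (fun x => a * (u x / v x) ^ p - b) l (𝓝 (a - b)) := by
    simpa using ((h.rpow_const (Or.inr hp.le)).const_mul a).sub_const b
  refine (hcoef.pos_mul_atTop (sub_pos.2 hab) ((tendsto_rpow_atTop hp).comp hv)).congr' ?_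
  filter_upwards [(tendsto_atTop_of_div_tendsto_one hv h).eventually_ge_atTop 0,
    hv.eventually_gt_atTop 0] with x hux hvx
  rw [Function.comp_apply, div_rpow hux hvx.le, sub_mul, mul_assoc,
    div_mul_cancel₀ _ (rpow_pos_of_pos hvx p).ne']

theorem stmt_9_general {Ω : Type*} [MeasurableSpace Ω] (μpr : Measure Ω)
    (α : ℝ) (hα : 1 < α)
    (X : Fin 3 → Ω → ℝ)
    (hindep : iIndepFun X μpr)
    (hsurv : ∀ i, ∀ x : ℝ, 1 < x →
      (μpr {ω | X i ω > x}).toReal = Real.exp (-(Real.log x ^ α)))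
    (f : ℝ → ℝ) (hf : ∀ x, f x = x / (2 * α * Real.log x ^ (α - 1))) :
    (∀ x : ℝ, 1 < x →
      (μpr {ω | min (X 0 ω) (X 1 ω) > x}).toReal = Real.exp (-(2 * Real.log x ^ α)) ∧
      (μpr {ω | min (X 1 ω) (X 2 ω) > x}).toReal = Real.exp (-(2 * Real.log x ^ α))) ∧
    Tendsto (fun x =>
      (μpr {ω | min (X 0 ω) (X 1 ω) > f x ∧ min (X 1 ω) (X 2 ω) > f x}).toReal /
        (μpr {ω | min (X 0 ω) (X 1 ω) > x}).toReal) atTop (nhds 0) := by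
  have hmin : ∀ {i j : Fin 3}, i ≠ j → ∀ x, 1 < x →
      (μpr {ω | min (X i ω) (X j ω) > x}).toReal = exp (-(2 * log x ^ α)) := by
    intro i j hij x hx
    rw [(hindep.indepFun hij).measure_lt_min, ENNReal.toReal_mul, hsurv i x hx, hsurv j x hx,
      ← exp_add]
    ring_nf
  refine ⟨fun x hx => ⟨hmin (by decide) x hx, hmin (by decide) x hx⟩, ?_⟩
  have h2α : 0 < 2 * α := by linarith
  have hlog : Tendsto (fun x => log (f x) / log x) atTop (𝓝 1) := by
    simpa only [hf] using tendsto_log_div_mul_log_rpow_div_log (α - 1) h2α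
  have hf_one : ∀ᶠ x in atTop, 1 < f x := by
    simpa only [hf] using (tendsto_div_mul_log_rpow_atTop (α - 1) h2α).eventually_gt_atTop 1
  have hexponent : Tendsto (fun x => 3 * log (f x) ^ α - 2 * log x ^ α) atTop atTop :=
    tendsto_mul_rpow_sub_mul_rpow_atTop (by linarith) (by norm_num) tendsto_log_atTop hlog
  refine (tendsto_exp_atBot.comp (tendsto_neg_atBot_iff.2 hexponent)).congr' ?_
  filter_upwards [hf_one, eventually_gt_atTop 1] with x hfx hx
  have hjoint : {ω | min (X 0 ω) (X 1 ω) > f x ∧ min (X 1 ω) (X 2 ω) > f x} =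
      {ω | ∀ i, f x < X i ω} := by
    ext ω
    simp only [Set.mem_ofPred_eq, Fin.forall_fin_succ]
    grind
  rw [Function.comp_apply, hjoint, hindep.measure_forall_lt, Fin.prod_univ_three, ENNReal.toReal_mul,
    ENNReal.toReal_mul, hsurv 0 _ hfx, hsurv 1 _ hfx, hsurv 2 _ hfx, hmin (by decide) x hx,
    ← exp_add, ← exp_add, ← exp_sub]
  ring_nf

/-- For `X₁,X₂,X₃` i.i.d. with survival function `exp(-(log x)^α)` for `x > 1` (`α > 1`),
`X = X₁ ∧ X₂` and `Y = X₂ ∧ X₃` are identically distributed with survival function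
`exp(-2(log x)^α)`, and with auxiliary function `f(x) = x/(2α(log x)^{α-1})` the
joint-tail condition `P(X > f(x), Y > f(x))/P(X > x) → 0` holds. -/
theorem stmt_9 {Ω : Type*} [MeasurableSpace Ω] (μpr : Measure Ω) [IsProbabilityMeasure μpr]
    (α : ℝ) (hα : 1 < α)
    (X : Fin 3 → Ω → ℝ) (hXm : ∀ i, Measurable (X i))
    (hindep : iIndepFun X μpr)
    (hsurv : ∀ i, ∀ x : ℝ, 1 < x →
      (μpr {ω | X i ω > x}).toReal = Real.exp (-(Real.log x ^ α)))
    (hsurv1 : ∀ i, ∀ x : ℝ, x ≤ 1 → (μpr {ω | X i ω > x}).toReal = 1)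
    (f : ℝ → ℝ) (hf : ∀ x, f x = x / (2 * α * Real.log x ^ (α - 1))) :
    (∀ x : ℝ, 1 < x →
      (μpr {ω | min (X 0 ω) (X 1 ω) > x}).toReal = Real.exp (-(2 * Real.log x ^ α)) ∧
      (μpr {ω | min (X 1 ω) (X 2 ω) > x}).toReal = Real.exp (-(2 * Real.log x ^ α))) ∧
    Tendsto (fun x =>
      (μpr {ω | min (X 0 ω) (X 1 ω) > f x ∧ min (X 1 ω) (X 2 ω) > f x}).toReal /
        (μpr {ω | min (X 0 ω) (X 1 ω) > x}).toReal) atTop (nhds 0) :=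
  stmt_9_general μpr α hα X hindep hsurv f hf
end

section
/- Let X₁, X₂, X₃ be i.i.d. with survival function exp(-(log x)^α), x>1 (α > 1), X = min(X₁,X₂), Y = min(X₂,X₃), and f(x) = x/(2α(log x)^{α-1}). Then for each t > 0, lim_{x→∞} P(X > x, Y > t f(x))/P(X > x) = 0. -/
/-!
Once `t f(x) ≤ x`, which holds eventually because `f(x) = o(x)`, the event
`{X₁ ∧ X₂ > x, X₂ ∧ X₃ > t f(x)}` is `{X₁ ∧ X₂ > x} ∩ {X₃ > t f(x)}`, so by independence the ratio is
at most `F̄(t f(x))`, which tends to `0` because `f(x) → ∞`.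
-/

open MeasureTheory Filter Real ProbabilityTheory Topology

theorem tendsto_div_const_mul_log_rpow_atTop {c : ℝ} (hc : 0 < c) (β : ℝ) :
    Tendsto (fun x => x / (c * log x ^ β)) atTop atTop := by
  have hsmall : Tendsto (fun x => c * log x ^ β / x) atTop (𝓝[>] 0) := by
    refine tendsto_nhdsWithin_iff.mpr ⟨?_, ?_⟩
    · simpa [mul_div_assoc] using
        (isLittleO_log_rpow_rpow_atTop β one_pos).tendsto_div_nhds_zero.const_mul c
    · filter_upwards [eventually_gt_atTop 1] with x hx
      have := log_pos hx
      show 0 < c * log x ^ β / x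
      positivity
  refine hsmall.inv_tendsto_nhdsGT_zero.congr' (Eventually.of_forall fun x => ?_)
  simp [inv_div]

theorem eventually_const_mul_div_le_self {c β : ℝ} (hc : 0 < c) (hβ : 0 < β) (t : ℝ) :
    ∀ᶠ x in atTop, t * (x / (c * log x ^ β)) ≤ x := by
  have hden : Tendsto (fun x => c * log x ^ β) atTop atTop :=
    ((tendsto_rpow_atTop hβ).comp tendsto_log_atTop).const_mul_atTop hc
  filter_upwards [hden.eventually_ge_atTop t, hden.eventually_gt_atTop 0,
    eventually_ge_atTop 0] with x htx hpos hx
  rw [mul_div_assoc', div_le_iff₀ hpos]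
  nlinarith

theorem tendsto_exp_neg_log_rpow_atTop {α : ℝ} (hα : 0 < α) :
    Tendsto (fun y => exp (-(log y ^ α))) atTop (𝓝 0) :=
  tendsto_exp_atBot.comp <| tendsto_neg_atTop_atBot.comp <|
    (tendsto_rpow_atTop hα).comp tendsto_log_atTop

theorem ProbabilityTheory.iIndepFun.measure_biInter_lt {Ω ι : Type*} [MeasurableSpace Ω]
    {μ : Measure Ω} {X : ι → Ω → ℝ} (hX : iIndepFun X μ) (S : Finset ι) (a : ι → ℝ) :
    μ (⋂ i ∈ S, {ω | a i < X i ω}) = ∏ i ∈ S, μ {ω | a i < X i ω} :=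
  hX.meas_biInter fun i _ => ⟨Set.Ioi (a i), measurableSet_Ioi, rfl⟩

theorem measure_min_gt_and_min_gt_of_le {Ω : Type*} [MeasurableSpace Ω] {μ : Measure Ω}
    {X : Fin 3 → Ω → ℝ} (hX : iIndepFun X μ) {x y : ℝ} (hyx : y ≤ x) :
    μ {ω | min (X 0 ω) (X 1 ω) > x ∧ min (X 1 ω) (X 2 ω) > y} =
      μ {ω | min (X 0 ω) (X 1 ω) > x} * μ {ω | X 2 ω > y} := by
  have hnum : {ω | min (X 0 ω) (X 1 ω) > x ∧ min (X 1 ω) (X 2 ω) > y} =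
      ⋂ i ∈ Finset.univ, {ω | ![x, x, y] i < X i ω} := by
    ext ω
    simp only [Set.mem_ofPred_eq, gt_iff_lt, lt_min_iff, Set.mem_iInter, Finset.mem_univ,
      forall_const, Fin.forall_fin_succ]
    exact ⟨fun ⟨⟨h0, h1⟩, _, h2⟩ => ⟨h0, h1, h2, nofun⟩,
      fun ⟨h0, h1, h2, _⟩ => ⟨⟨h0, h1⟩, hyx.trans_lt h1, h2⟩⟩
  have hden : {ω | min (X 0 ω) (X 1 ω) > x} =
      ⋂ i ∈ ({0, 1} : Finset (Fin 3)), {ω | ![x, x, y] i < X i ω} := by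
    ext ω
    simp
  rw [hnum, hden, hX.measure_biInter_lt, hX.measure_biInter_lt, Fin.prod_univ_three,
    Finset.prod_pair (by decide)]
  rfl

theorem stmt_10_general {Ω : Type*} [MeasurableSpace Ω] (μpr : Measure Ω)
    (α : ℝ) (hα : 1 < α)
    (X : Fin 3 → Ω → ℝ)
    (hindep : iIndepFun X μpr)
    (hsurv : ∀ i, ∀ x : ℝ, 1 < x →
      (μpr {ω | X i ω > x}).toReal = Real.exp (-(Real.log x ^ α)))
    (f : ℝ → ℝ) (hf : ∀ x, f x = x / (2 * α * Real.log x ^ (α - 1))) :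
    ∀ t > (0:ℝ), Tendsto (fun x =>
      (μpr {ω | min (X 0 ω) (X 1 ω) > x ∧ min (X 1 ω) (X 2 ω) > t * f x}).toReal /
        (μpr {ω | min (X 0 ω) (X 1 ω) > x}).toReal) atTop (nhds 0) := by
  intro t ht
  obtain rfl : f = _ := funext hf
  have hc : 0 < 2 * α := by linarith
  have hy : Tendsto (fun x => t * (x / (2 * α * log x ^ (α - 1)))) atTop atTop :=
    (tendsto_div_const_mul_log_rpow_atTop hc _).const_mul_atTop ht
  have htail : Tendsto (fun x => (μpr {ω | X 2 ω > t * (x / (2 * α * log x ^ (α - 1)))}).toReal)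
      atTop (𝓝 0) :=
    ((tendsto_exp_neg_log_rpow_atTop (α := α) (by linarith)).comp hy).congr'
      (by filter_upwards [hy.eventually_gt_atTop 1] with x hx using (hsurv 2 _ hx).symm)
  refine squeeze_zero' (Eventually.of_forall fun x => by positivity) ?_ htail
  filter_upwards [eventually_const_mul_div_le_self hc (sub_pos.mpr hα) t] with x hx
  rw [measure_min_gt_and_min_gt_of_le hindep hx, ENNReal.toReal_mul]
  exact div_le_of_le_mul₀ ENNReal.toReal_nonneg ENNReal.toReal_nonneg (mul_comm _ _).le

/-- In the minimum construction (`X = X₁ ∧ X₂`, `Y = X₂ ∧ X₃` with i.i.d. `Xᵢ` having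
survival function `exp(-(log x)^α)` for `x > 1`, `α > 1`), for each `t > 0`,
`P(X > x, Y > t f(x))/P(X > x) → 0` where `f(x) = x/(2α(log x)^{α-1})`. -/
theorem stmt_10 {Ω : Type*} [MeasurableSpace Ω] (μpr : Measure Ω) [IsProbabilityMeasure μpr]
    (α : ℝ) (hα : 1 < α)
    (X : Fin 3 → Ω → ℝ) (hXm : ∀ i, Measurable (X i))
    (hindep : iIndepFun X μpr)
    (hsurv : ∀ i, ∀ x : ℝ, 1 < x →
      (μpr {ω | X i ω > x}).toReal = Real.exp (-(Real.log x ^ α)))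
    (hsurv1 : ∀ i, ∀ x : ℝ, x ≤ 1 → (μpr {ω | X i ω > x}).toReal = 1)
    (f : ℝ → ℝ) (hf : ∀ x, f x = x / (2 * α * Real.log x ^ (α - 1))) :
    ∀ t > (0:ℝ), Tendsto (fun x =>
      (μpr {ω | min (X 0 ω) (X 1 ω) > x ∧ min (X 1 ω) (X 2 ω) > t * f x}).toReal /
        (μpr {ω | min (X 0 ω) (X 1 ω) > x}).toReal) atTop (nhds 0) :=
  stmt_10_general μpr α hα X hindep hsurv f hf
end

section
/- Let X ~ Lognormal(μ, σ²) and Y = e^{2μ}/X. Then X and Y are identically distributed, and P(X + Y > x) ∼ 2 P(X > x) as x → ∞. -/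
open MeasureTheory Filter Real ProbabilityTheory Set Topology
open scoped NNReal

/-!
Since `Y = exp (μ - σ Z)` and `-Z` is again standard normal, `X` and `Y` have the same law.
As `X Y = e^{2μ}`, the events `{X > x}` and `{Y > x}` are disjoint once `x ≥ e^μ`, while `X + Y > x`
forces `X > x - e^μ` or `Y > x - e^μ`; hence `2 P(X > x) ≤ P(X + Y > x) ≤ 2 P(X > x - e^μ)`.
What remains is that the lognormal law is long-tailed. With `t = (log x - μ) / σ` and
`η = (log x - log (x - e^μ)) / σ`, so that `t η → 0`, the standard Gaussian tail `Φ̄` satisfies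
`Φ̄(t - η) - Φ̄(t) ≤ η φ(t - η)` and `Φ̄(t) ≥ φ(t + 1/t) / t`, and the ratio of the two densities is
at most `t e^{t η + 2}`, so `Φ̄(t - η) / Φ̄(t) → 1`.
-/

namespace ProbabilityTheory

lemma gaussianPDFReal_zero_one_antitoneOn : AntitoneOn (gaussianPDFReal 0 1) (Ici 0) := by
  intro a ha b _ hab
  simp only [gaussianPDFReal, sub_zero, NNReal.coe_one, mul_one]
  gcongr

lemma gaussianPDFReal_zero_one_eq_exp_mul (a b : ℝ) :
    gaussianPDFReal 0 1 a = exp ((b ^ 2 - a ^ 2) / 2) * gaussianPDFReal 0 1 b := by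
  simp only [gaussianPDFReal, sub_zero, NNReal.coe_one, mul_one]
  rw [mul_left_comm, ← exp_add]
  ring_nf

lemma gaussianReal_real_eq_integral (μ : ℝ) {v : ℝ≥0} (hv : v ≠ 0) (s : Set ℝ) :
    (gaussianReal μ v).real s = ∫ x in s, gaussianPDFReal μ v x := by
  rw [measureReal_def, gaussianReal_apply_eq_integral _ hv,
    ENNReal.toReal_ofReal (setIntegral_nonneg_of_ae (ae_of_all _ (gaussianPDFReal_nonneg μ v)))]

lemma gaussianReal_real_Ioc_le {a b : ℝ} (ha : 0 ≤ a) (hab : a ≤ b) :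
    (gaussianReal 0 1).real (Ioc a b) ≤ (b - a) * gaussianPDFReal 0 1 a := by
  rw [gaussianReal_real_eq_integral _ one_ne_zero, ← volume_real_Ioc_of_le hab, mul_comm]
  refine (le_norm_self _).trans (norm_setIntegral_le_of_norm_le_const measure_Ioc_lt_top
    fun x hx => ?_)
  rw [Real.norm_of_nonneg (gaussianPDFReal_nonneg 0 1 x)]
  exact gaussianPDFReal_zero_one_antitoneOn ha (ha.trans hx.1.le) hx.1.le

lemma le_gaussianReal_real_Ioc {a b : ℝ} (ha : 0 ≤ a) (hab : a ≤ b) :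
    (b - a) * gaussianPDFReal 0 1 b ≤ (gaussianReal 0 1).real (Ioc a b) := by
  rw [gaussianReal_real_eq_integral _ one_ne_zero, ← volume_real_Ioc_of_le hab, mul_comm]
  refine setIntegral_ge_of_const_le_real measurableSet_Ioc measure_Ioc_lt_top.ne
    (fun x hx => ?_) (integrable_gaussianPDFReal 0 1).integrableOn
  exact gaussianPDFReal_zero_one_antitoneOn (ha.trans hx.1.le) (ha.trans hab) hx.2

lemma gaussianReal_real_Ioi_eq_Ioc_add {a b : ℝ} (hab : a ≤ b) :
    (gaussianReal 0 1).real (Ioi a) =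
      (gaussianReal 0 1).real (Ioc a b) + (gaussianReal 0 1).real (Ioi b) := by
  rw [← Ioc_union_Ioi_eq_Ioi hab, measureReal_union (Ioc_disjoint_Ioi le_rfl) measurableSet_Ioi]

lemma inv_mul_gaussianPDFReal_le_gaussianReal_real_Ioi {s : ℝ} (hs : 0 < s) :
    s⁻¹ * gaussianPDFReal 0 1 (s + s⁻¹) ≤ (gaussianReal 0 1).real (Ioi s) := by
  have hle : s ≤ s + s⁻¹ := le_add_of_nonneg_right (inv_nonneg.2 hs.le)
  calc s⁻¹ * gaussianPDFReal 0 1 (s + s⁻¹)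
      = (s + s⁻¹ - s) * gaussianPDFReal 0 1 (s + s⁻¹) := by ring
    _ ≤ (gaussianReal 0 1).real (Ioc s (s + s⁻¹)) := le_gaussianReal_real_Ioc hs.le hle
    _ ≤ (gaussianReal 0 1).real (Ioi s) := measureReal_mono Ioc_subset_Ioi_self

lemma gaussianReal_real_Ioi_pos (s : ℝ) : 0 < (gaussianReal 0 1).real (Ioi s) := by
  have hpos : 0 < |s| + 1 := by positivity
  calc 0 < (|s| + 1)⁻¹ * gaussianPDFReal 0 1 (|s| + 1 + (|s| + 1)⁻¹) :=
        mul_pos (inv_pos.2 hpos) (gaussianPDFReal_pos _ _ _ one_ne_zero)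
    _ ≤ (gaussianReal 0 1).real (Ioi (|s| + 1)) :=
        inv_mul_gaussianPDFReal_le_gaussianReal_real_Ioi hpos
    _ ≤ (gaussianReal 0 1).real (Ioi s) :=
        measureReal_mono (Ioi_subset_Ioi (by linarith [le_abs_self s]))

lemma gaussianReal_real_Ioi_sub_le {t η : ℝ} (ht : 1 ≤ t) (hη₀ : 0 ≤ η) (hη₁ : η ≤ 1) :
    (gaussianReal 0 1).real (Ioi (t - η)) ≤
      (1 + t * η * exp (t * η + 2)) * (gaussianReal 0 1).real (Ioi t) := by
  have ht₀ : 0 < t := one_pos.trans_le ht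
  have hexp : exp (((t + t⁻¹) ^ 2 - (t - η) ^ 2) / 2) ≤ exp (t * η + 2) := by
    have : t⁻¹ ≤ 1 := inv_le_one_of_one_le₀ ht
    have : t * t⁻¹ = 1 := mul_inv_cancel₀ ht₀.ne'
    gcongr
    nlinarith [inv_pos.2 ht₀]
  have hpdf : gaussianPDFReal 0 1 (t - η) ≤ t * exp (t * η + 2) * (gaussianReal 0 1).real (Ioi t) :=
    calc gaussianPDFReal 0 1 (t - η)
        = exp (((t + t⁻¹) ^ 2 - (t - η) ^ 2) / 2) * gaussianPDFReal 0 1 (t + t⁻¹) :=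
          gaussianPDFReal_zero_one_eq_exp_mul _ _
      _ ≤ exp (t * η + 2) * gaussianPDFReal 0 1 (t + t⁻¹) := by
          gcongr; exact gaussianPDFReal_nonneg 0 1 _
      _ = t * exp (t * η + 2) * (t⁻¹ * gaussianPDFReal 0 1 (t + t⁻¹)) := by
          field_simp
      _ ≤ t * exp (t * η + 2) * (gaussianReal 0 1).real (Ioi t) := by
          gcongr; exact inv_mul_gaussianPDFReal_le_gaussianReal_real_Ioi ht₀
  calc (gaussianReal 0 1).real (Ioi (t - η))
      = (gaussianReal 0 1).real (Ioc (t - η) t) + (gaussianReal 0 1).real (Ioi t) :=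
        gaussianReal_real_Ioi_eq_Ioc_add (by linarith)
    _ ≤ (t - (t - η)) * gaussianPDFReal 0 1 (t - η) + (gaussianReal 0 1).real (Ioi t) := by
        gcongr; exact gaussianReal_real_Ioc_le (by linarith) (by linarith)
    _ ≤ η * (t * exp (t * η + 2) * (gaussianReal 0 1).real (Ioi t)) +
          (gaussianReal 0 1).real (Ioi t) := by
        rw [sub_sub_cancel]; gcongr
    _ = (1 + t * η * exp (t * η + 2)) * (gaussianReal 0 1).real (Ioi t) := by ring

theorem tendsto_gaussianReal_real_Ioi_sub_div {α : Type*} {l : Filter α} {t η : α → ℝ}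
    (ht : Tendsto t l atTop) (hη : ∀ᶠ a in l, 0 ≤ η a)
    (htη : Tendsto (fun a => t a * η a) l (𝓝 0)) :
    Tendsto (fun a => (gaussianReal 0 1).real (Ioi (t a - η a)) /
      (gaussianReal 0 1).real (Ioi (t a))) l (𝓝 1) := by
  have hbound : Tendsto (fun a => 1 + t a * η a * exp (t a * η a + 2)) l (𝓝 1) := by
    simpa using tendsto_const_nhds.add (htη.mul ((htη.add_const 2).rexp))
  refine tendsto_of_tendsto_of_tendsto_of_le_of_le' tendsto_const_nhds hbound ?_ ?_
  · filter_upwards [hη] with a ha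
    rw [le_div_iff₀ (gaussianReal_real_Ioi_pos _), one_mul]
    exact measureReal_mono (Ioi_subset_Ioi (sub_le_self _ ha))
  · filter_upwards [hη, ht.eventually_ge_atTop 1, htη.eventually (ge_mem_nhds one_pos)]
      with a ha₀ ht₁ htη₁
    have ha₁ : η a ≤ 1 := by nlinarith
    rw [div_le_iff₀ (gaussianReal_real_Ioi_pos _)]
    exact gaussianReal_real_Ioi_sub_le ht₁ ha₀ ha₁

end ProbabilityTheory

lemma Real.log_sub_log_sub_le {x c : ℝ} (hx : 0 < x) (hcx : c < x) :
    log x - log (x - c) ≤ c / (x - c) := by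
  have hxc : 0 < x - c := sub_pos.2 hcx
  rw [← log_div hx.ne' hxc.ne']
  refine (log_le_sub_one_of_pos (div_pos hx hxc)).trans_eq ?_
  field_simp
  ring

lemma Real.tendsto_log_sub_div_sub_atTop (μ c : ℝ) :
    Tendsto (fun x => (log x - μ) / (x - c)) atTop (𝓝 0) := by
  have hlog : Tendsto (fun x => log x / (x - c)) atTop (𝓝 0) := by
    simpa [sub_eq_add_neg] using tendsto_pow_log_div_mul_add_atTop 1 (-c) 1 one_ne_zero
  have hconst : Tendsto (fun x => μ / (x - c)) atTop (𝓝 0) :=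
    tendsto_const_nhds.div_atTop (tendsto_atTop_add_const_right _ _ tendsto_id)
  simpa [sub_div] using hlog.sub hconst

lemma setOf_lt_exp_add_mul {μ σ x : ℝ} (hσ : 0 < σ) (hx : 0 < x) :
    {z | x < exp (μ + σ * z)} = Ioi ((log x - μ) / σ) := by
  ext z
  rw [mem_ofPred_eq, mem_Ioi, ← log_lt_iff_lt_exp hx, div_lt_iff₀ hσ]
  constructor <;> intro h <;> linarith

namespace ProbabilityTheory

variable {Ω : Type*} [MeasurableSpace Ω] {P : Measure Ω} {Z X : Ω → ℝ} {μ σ : ℝ}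

lemma measureReal_lt_of_eq_exp_add_mul (hZ : HasLaw Z (gaussianReal 0 1) P) (hσ : 0 < σ)
    (hX : ∀ ω, X ω = exp (μ + σ * Z ω)) {x : ℝ} (hx : 0 < x) :
    P.real {ω | x < X ω} = (gaussianReal 0 1).real (Ioi ((log x - μ) / σ)) := by
  simp_rw [hX]
  rw [hZ.measureReal_eq (p := fun z => x < exp (μ + σ * z))
    (measurableSet_lt measurable_const (by fun_prop)), setOf_lt_exp_add_mul hσ hx]

theorem tendsto_measureReal_lt_sub_div_of_eq_exp_add_mul (hZ : HasLaw Z (gaussianReal 0 1) P)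
    (hσ : 0 < σ) (hX : ∀ ω, X ω = exp (μ + σ * Z ω)) {c : ℝ} (hc : 0 ≤ c) :
    Tendsto (fun x => P.real {ω | x - c < X ω} / P.real {ω | x < X ω}) atTop (𝓝 1) := by
  set t : ℝ → ℝ := fun x => (log x - μ) / σ
  set η : ℝ → ℝ := fun x => (log x - log (x - c)) / σ
  have ht : Tendsto t atTop atTop :=
    (tendsto_atTop_add_const_right _ _ tendsto_log_atTop).atTop_div_const hσ
  have hη : ∀ᶠ x in atTop, 0 ≤ η x := by
    filter_upwards [eventually_gt_atTop c] with x hx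
    exact div_nonneg (sub_nonneg.2 (log_le_log (by linarith) (by linarith))) hσ.le
  have htη : Tendsto (fun x => t x * η x) atTop (𝓝 0) := by
    have hbound := (tendsto_log_sub_div_sub_atTop μ c).mul_const (c / σ ^ 2)
    rw [zero_mul] at hbound
    refine tendsto_of_tendsto_of_tendsto_of_le_of_le' tendsto_const_nhds hbound ?_ ?_
    · filter_upwards [hη, ht.eventually_ge_atTop 0] with x hηx htx
      exact mul_nonneg htx hηx
    · filter_upwards [eventually_gt_atTop c, eventually_gt_atTop 0, eventually_ge_atTop (exp μ)]
        with x hcx hx hμx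
      have hlog : 0 ≤ log x - μ := sub_nonneg.2 ((le_log_iff_exp_le hx).2 hμx)
      calc t x * η x = (log x - μ) * (log x - log (x - c)) / σ ^ 2 := by ring
        _ ≤ (log x - μ) * (c / (x - c)) / σ ^ 2 := by
            gcongr; exact log_sub_log_sub_le hx hcx
        _ = (log x - μ) / (x - c) * (c / σ ^ 2) := by ring
  refine (tendsto_gaussianReal_real_Ioi_sub_div ht hη htη).congr' ?_
  filter_upwards [eventually_gt_atTop c, eventually_gt_atTop 0] with x hcx hx
  rw [measureReal_lt_of_eq_exp_add_mul hZ hσ hX hx,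
    measureReal_lt_of_eq_exp_add_mul hZ hσ hX (sub_pos.2 hcx)]
  congr 3
  ring

section ProductBounded

variable [IsFiniteMeasure P] {Y : Ω → ℝ} {c : ℝ}

lemma measureReal_lt_add_measureReal_lt_le_of_mul_le (hY : AEMeasurable Y P) (hX₀ : ∀ ω, 0 ≤ X ω)
    (hY₀ : ∀ ω, 0 ≤ Y ω) (hmul : ∀ ω, X ω * Y ω ≤ c ^ 2) (hc : 0 ≤ c) {x : ℝ} (hcx : c ≤ x) :
    P.real {ω | x < X ω} + P.real {ω | x < Y ω} ≤ P.real {ω | x < X ω + Y ω} := by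
  have hdisj : Disjoint {ω | x < X ω} {ω | x < Y ω} :=
    disjoint_left.2 fun ω hXω hYω => by
      have := hmul ω
      simp only [mem_ofPred_eq] at hXω hYω
      nlinarith
  rw [← measureReal_union₀ (nullMeasurableSet_lt aemeasurable_const hY) hdisj.aedisjoint]
  refine measureReal_mono (union_subset (fun ω hω => ?_) fun ω hω => ?_)
  · simp only [mem_ofPred_eq] at hω ⊢; linarith [hY₀ ω]
  · simp only [mem_ofPred_eq] at hω ⊢; linarith [hX₀ ω]

lemma measureReal_lt_add_le_of_mul_le (hmul : ∀ ω, X ω * Y ω ≤ c ^ 2) (hc : 0 ≤ c) (x : ℝ) :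
    P.real {ω | x < X ω + Y ω} ≤ P.real {ω | x - c < X ω} + P.real {ω | x - c < Y ω} := by
  refine (measureReal_mono fun ω hω => ?_).trans (measureReal_union_le _ _)
  simp only [mem_ofPred_eq, mem_union] at hω ⊢
  by_contra! h
  nlinarith [hmul ω]

theorem tendsto_measureReal_lt_add_div_of_mul_le (hXY : IdentDistrib X Y P P)
    (hX₀ : ∀ ω, 0 ≤ X ω) (hY₀ : ∀ ω, 0 ≤ Y ω) (hmul : ∀ ω, X ω * Y ω ≤ c ^ 2) (hc : 0 ≤ c)
    (hlong : Tendsto (fun x => P.real {ω | x - c < X ω} / P.real {ω | x < X ω}) atTop (𝓝 1)) :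
    Tendsto (fun x => P.real {ω | x < X ω + Y ω} / P.real {ω | x < X ω}) atTop (𝓝 2) := by
  have htail : ∀ x, P.real {ω | x < Y ω} = P.real {ω | x < X ω} := fun x =>
    congrArg ENNReal.toReal (hXY.measure_mem_eq measurableSet_Ioi).symm
  have hpos : ∀ᶠ x in atTop, 0 < P.real {ω | x < X ω} := by
    filter_upwards [hlong.eventually (lt_mem_nhds one_pos)] with x hx
    exact measureReal_nonneg.lt_of_ne fun h => by simp [← h] at hx
  have hlong₂ := hlong.const_mul 2
  rw [mul_one] at hlong₂
  refine tendsto_of_tendsto_of_tendsto_of_le_of_le' tendsto_const_nhds hlong₂ ?_ ?_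
  · filter_upwards [hpos, eventually_ge_atTop c] with x hx hcx
    rw [le_div_iff₀ hx]
    linarith [measureReal_lt_add_measureReal_lt_le_of_mul_le hXY.aemeasurable_snd hX₀ hY₀ hmul
      hc hcx, htail x]
  · filter_upwards [hpos] with x hx
    rw [← mul_div_assoc, div_le_div_iff_of_pos_right hx]
    linarith [measureReal_lt_add_le_of_mul_le (P := P) hmul hc x, htail (x - c)]

end ProductBounded

lemma identDistrib_neg_of_hasLaw_gaussianReal {v : ℝ≥0} (hZ : HasLaw Z (gaussianReal 0 v) P) :
    IdentDistrib Z (-Z) P P :=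
  ⟨hZ.aemeasurable, hZ.aemeasurable.neg, by rw [(gaussianReal_neg hZ).map_eq, hZ.map_eq, neg_zero]⟩

end ProbabilityTheory

/-- For `X ~ Lognormal(μ,σ²)` (i.e. `X = exp(μ + σZ)`, `Z` standard normal) and
`Y = e^{2μ}/X`, the variables `X` and `Y` are identically distributed and
`P(X + Y > x) ∼ 2 P(X > x)` as `x → ∞`. -/
theorem stmt_11 {Ω : Type*} [MeasurableSpace Ω] (μpr : Measure Ω) [IsProbabilityMeasure μpr]
    (μ σ : ℝ) (hσ : 0 < σ)
    (Z : Ω → ℝ) (hZm : Measurable Z)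
    (hZ : Measure.map Z μpr = gaussianReal 0 1)
    (X Y : Ω → ℝ)
    (hX : ∀ ω, X ω = Real.exp (μ + σ * Z ω))
    (hY : ∀ ω, Y ω = Real.exp (2 * μ) / X ω) :
    (∀ x : ℝ, μpr {ω | X ω ≤ x} = μpr {ω | Y ω ≤ x}) ∧
    Tendsto (fun x =>
      (μpr {ω | X ω + Y ω > x}).toReal / (μpr {ω | X ω > x}).toReal)
      atTop (nhds 2) := by
  have hZlaw : HasLaw Z (gaussianReal 0 1) μpr := ⟨hZm.aemeasurable, hZ⟩
  have hYZ : ∀ ω, Y ω = exp (μ + σ * (-Z) ω) := fun ω => by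
    rw [hY, hX, ← exp_sub, Pi.neg_apply]; ring_nf
  have hXY : IdentDistrib X Y μpr μpr := by
    rw [funext hX, funext hYZ]
    exact (identDistrib_neg_of_hasLaw_gaussianReal hZlaw).comp
      (u := fun z => exp (μ + σ * z)) (by fun_prop)
  have hmul : ∀ ω, X ω * Y ω = exp μ ^ 2 := fun ω => by
    rw [hX, hYZ, ← exp_add, ← exp_nat_mul, Pi.neg_apply]; ring_nf
  refine ⟨fun x => hXY.measure_mem_eq measurableSet_Iic, ?_⟩
  simp only [gt_iff_lt, ← measureReal_def]
  exact tendsto_measureReal_lt_add_div_of_mul_le hXY (fun ω => (hX ω).symm ▸ (exp_pos _).le)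
    (fun ω => (hYZ ω).symm ▸ (exp_pos _).le) (fun ω => (hmul ω).le) (exp_pos μ).le
    (tendsto_measureReal_lt_sub_div_of_eq_exp_add_mul hZlaw hσ hX (exp_pos μ).le)
end

section
/- Let F ∈ MDA(Λ) with auxiliary function f satisfying liminf_{x→∞} f(x) = δ > 0, supported on [0,∞) with inf{x : F(x)>0} = 0 and sup{x : F(x)<1} = ∞. Let U ~ Uniform(0,1), X = F⁻¹(U) (generalized inverse), Y = F⁻¹(1-U). Then P(X + Y > x) ∼ 2 P(X > x) as x → ∞. -/
/-!
Write `Q = F⁻¹`, so `X = Q U` and `Y = Q (1 - U)`. Once `F x ≥ 1/2`, the events `X > x` and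
`Y > x` force `U > 1/2` and `U < 1/2` respectively, and `X, Y ≥ 0`; hence
`P(X + Y > x) ≥ 2 (1 - F (x + η))`. Conversely, `F` charges every neighbourhood of `0`, so for
each `ε > 0` either `min X Y ≤ ε` or `X + Y` is bounded; for large `x` this gives
`P(X + Y > x) ≤ 2 (1 - F (x - ε))`. Together with `1 - F (x + η) ≤ P(X > x) ≤ 1 - F x`, it
remains to see that the tail `1 - F` changes by a factor close to `1` under small shifts: since
`f ≥ δ / 2` eventually, a shift by `c` is dominated by a shift by `(2c/δ) f x`, which the Gumbel
condition controls by `exp (± 2c/δ)`.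
-/

open MeasureTheory Filter Real Set Topology

noncomputable def quantile (F : ℝ → ℝ) (p : ℝ) : ℝ := sInf {x | p ≤ F x}

section Quantile

variable {F : ℝ → ℝ} {p z : ℝ}

lemma quantile_le (hsupp : ∀ x < 0, F x = 0) (hp : 0 < p) (hz : p ≤ F z) :
    quantile F p ≤ z := by
  refine csInf_le ⟨0, fun x hx => ?_⟩ hz
  by_contra! hx0
  have : p ≤ F x := hx
  linarith [hsupp x hx0]

lemma lt_of_lt_quantile (hsupp : ∀ x < 0, F x = 0) (hp : 0 < p) (h : z < quantile F p) :
    F z < p :=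
  lt_of_not_ge fun hz => (quantile_le hsupp hp hz).not_gt h

lemma le_quantile (hmono : Monotone F) (hF : Tendsto F atTop (𝓝 1)) (hz : F z < p)
    (hp : p < 1) : z ≤ quantile F p :=
  le_csInf (hF.eventually (eventually_ge_nhds hp)).exists fun _ hx =>
    le_of_not_gt fun hxz => (hz.trans_le hx).not_ge (hmono hxz.le)

lemma quantile_nonneg (hsupp : ∀ x < 0, F x = 0) (hp : 0 < p) : 0 ≤ quantile F p :=
  Real.sInf_nonneg fun x hx => le_of_not_gt fun hx0 => by
    have : p ≤ F x := hx
    linarith [hsupp x hx0]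

lemma exists_min_quantile_le_or_max_quantile_le (hsupp : ∀ x < 0, F x = 0)
    (hF : Tendsto F atTop (𝓝 1)) (hlow : sInf {x | 0 < F x} = 0) {ε : ℝ} (hε : 0 < ε) :
    ∃ M, ∀ u ∈ Ioo (0 : ℝ) 1,
      min (quantile F u) (quantile F (1 - u)) ≤ ε ∨
        max (quantile F u) (quantile F (1 - u)) ≤ M := by
  have hpos : {x | 0 < F x}.Nonempty := (hF.eventually (eventually_gt_nhds one_pos)).exists
  obtain ⟨z₀, hz₀ : 0 < F z₀, hz₀ε⟩ := exists_lt_of_csInf_lt hpos (hlow ▸ hε)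
  obtain ⟨M, hM⟩ := (hF.eventually (eventually_ge_nhds (sub_lt_self 1 hz₀))).exists
  refine ⟨M, fun u ⟨hu0, hu1⟩ => ?_⟩
  by_cases hsmall : u ≤ F z₀ ∨ 1 - u ≤ F z₀
  · left
    rcases hsmall with h | h
    · exact (min_le_left _ _).trans ((quantile_le hsupp hu0 h).trans hz₀ε.le)
    · exact (min_le_right _ _).trans ((quantile_le hsupp (by linarith) h).trans hz₀ε.le)
  · push Not at hsmall
    exact Or.inr (max_le (quantile_le hsupp hu0 (by linarith))
      (quantile_le hsupp (by linarith) (by linarith)))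

end Quantile

def GumbelMDA (F f : ℝ → ℝ) : Prop :=
  ∀ s : ℝ, Tendsto (fun t => (1 - F (t + s * f t)) / (1 - F t)) atTop (𝓝 (exp (-s)))

section Tail

variable {F f : ℝ → ℝ}

lemma tendsto_atTop_one_of_tendsto_tail_ratio (hmono : Monotone F) (hle : ∀ x, F x ≤ 1)
    (hf : ∀ x, 0 ≤ f x) {L : ℝ} (hL : L ≠ 1)
    (hratio : Tendsto (fun t => (1 - F (t + f t)) / (1 - F t)) atTop (𝓝 L)) :
    Tendsto F atTop (𝓝 1) := by
  have hbdd : BddAbove (range F) := ⟨1, by rintro _ ⟨x, rfl⟩; exact hle x⟩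
  have hsup : Tendsto F atTop (𝓝 (⨆ x, F x)) := tendsto_atTop_ciSup hmono hbdd
  rcases (ciSup_le hle).lt_or_eq with hlt | heq
  · have hshift : Tendsto (fun t => F (t + f t)) atTop (𝓝 (⨆ x, F x)) :=
      tendsto_of_tendsto_of_tendsto_of_le_of_le hsup tendsto_const_nhds
        (fun t => hmono (le_add_of_nonneg_right (hf t))) (fun t => le_ciSup hbdd _)
    have hne : 1 - ⨆ x, F x ≠ 0 := sub_ne_zero.mpr hlt.ne'
    have hone := ((tendsto_const_nhds (x := (1 : ℝ))).sub hshift).div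
      (tendsto_const_nhds.sub hsup) hne
    rw [div_self hne] at hone
    exact absurd (tendsto_nhds_unique hratio hone) hL
  · rwa [heq] at hsup

variable {a : ℝ}

lemma exists_pos_eventually_mul_tail_lt_tail_add (hmono : Monotone F) (hF1 : ∀ x, F x < 1)
    (ha : 0 < a) (hf : ∀ᶠ x in atTop, a ≤ f x)
    (hMDA : GumbelMDA F f)
    {L : ℝ} (hL : L < 1) :
    ∃ c > 0, ∀ᶠ x in atTop, L * (1 - F x) < 1 - F (x + c) := by
  have hexp : Tendsto (fun s => exp (-s)) (𝓝[>] 0) (𝓝 1) :=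
    ((by fun_prop : Continuous fun s : ℝ => exp (-s)).tendsto' 0 1 (by simp)).mono_left
      nhdsWithin_le_nhds
  obtain ⟨s, hLs, hs⟩ :=
    ((hexp.eventually (lt_mem_nhds hL)).and self_mem_nhdsWithin).exists
  refine ⟨a * s, mul_pos ha hs, ?_⟩
  filter_upwards [(hMDA s).eventually (lt_mem_nhds hLs), hf] with x hx hfx
  have hstep : x + a * s ≤ x + s * f x := by nlinarith
  calc L * (1 - F x) < 1 - F (x + s * f x) := (lt_div_iff₀ (by linarith [hF1 x])).mp hx
    _ ≤ 1 - F (x + a * s) := by linarith [hmono hstep]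

lemma exists_pos_eventually_tail_sub_lt_mul_tail (hmono : Monotone F) (hF1 : ∀ x, F x < 1)
    (ha : 0 < a) (hf : ∀ᶠ x in atTop, a ≤ f x)
    (hMDA : GumbelMDA F f)
    {L : ℝ} (hL : 1 < L) :
    ∃ c > 0, ∀ᶠ x in atTop, 1 - F (x - c) < L * (1 - F x) := by
  have hexp : Tendsto exp (𝓝[>] 0) (𝓝 1) :=
    (continuous_exp.tendsto' 0 1 exp_zero).mono_left nhdsWithin_le_nhds
  obtain ⟨s, hsL, hs⟩ :=
    ((hexp.eventually (gt_mem_nhds hL)).and self_mem_nhdsWithin).exists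
  refine ⟨a * s, mul_pos ha hs, ?_⟩
  have hlim := hMDA (-s)
  rw [neg_neg] at hlim
  filter_upwards [hlim.eventually (gt_mem_nhds hsL), hf] with x hx hfx
  have hstep : x + -s * f x ≤ x - a * s := by nlinarith
  calc 1 - F (x - a * s) ≤ 1 - F (x + -s * f x) := by linarith [hmono hstep]
    _ < L * (1 - F x) := (div_lt_iff₀ (by linarith [hF1 x])).mp hx

end Tail

lemma volume_Ioo_add_volume_Ioo_one_sub {y : ℝ} (hy : y ≤ 1) :
    volume (Ioo y 1) + volume (Ioo 0 (1 - y)) = ENNReal.ofReal (2 * (1 - y)) := by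
  rw [Real.volume_Ioo, Real.volume_Ioo, sub_zero, ← ENNReal.ofReal_add (by linarith)
    (by linarith), two_mul]

section Uniform

variable {Ω : Type*} [MeasurableSpace Ω] {ℙ : Measure Ω} {U : Ω → ℝ} {F : ℝ → ℝ}

lemma measure_preimage_le_of_map_eq (hUm : AEMeasurable U ℙ)
    (hU : ℙ.map U = volume.restrict (Ioo 0 1)) {s t : Set ℝ} (hst : s ∩ Ioo 0 1 ⊆ t) :
    ℙ (U ⁻¹' s) ≤ volume t :=
  calc ℙ (U ⁻¹' s) ≤ ℙ.map U s := Measure.le_map_apply hUm s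
    _ = volume (s ∩ Ioo 0 1) := by rw [hU, Measure.restrict_apply' measurableSet_Ioo]
    _ ≤ volume t := measure_mono hst

lemma volume_le_measure_preimage_of_map_eq (hUm : AEMeasurable U ℙ)
    (hU : ℙ.map U = volume.restrict (Ioo 0 1)) {s t : Set ℝ} (ht : MeasurableSet t)
    (ht01 : t ⊆ Ioo 0 1) (hts : t ⊆ s) : volume t ≤ ℙ (U ⁻¹' s) :=
  calc volume t = ℙ.map U t := by
        rw [hU, Measure.restrict_apply ht, inter_eq_left.mpr ht01]
    _ = ℙ (U ⁻¹' t) := Measure.map_apply_of_aemeasurable hUm ht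
    _ ≤ ℙ (U ⁻¹' s) := measure_mono (preimage_mono hts)

lemma toReal_measure_lt_quantile_le (hUm : AEMeasurable U ℙ)
    (hU : ℙ.map U = volume.restrict (Ioo 0 1)) (hsupp : ∀ x < 0, F x = 0) {x : ℝ}
    (hx : F x ≤ 1) : (ℙ {ω | x < quantile F (U ω)}).toReal ≤ 1 - F x := by
  refine ENNReal.toReal_le_of_le_ofReal (sub_nonneg.mpr hx) ?_
  rw [← Real.volume_Ioo]
  exact measure_preimage_le_of_map_eq hUm hU (s := {u | x < quantile F u})
    fun u ⟨hu, hu0, hu1⟩ => ⟨lt_of_lt_quantile hsupp hu0 hu, hu1⟩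

lemma le_toReal_measure_lt_quantile [IsFiniteMeasure ℙ] (hUm : AEMeasurable U ℙ)
    (hU : ℙ.map U = volume.restrict (Ioo 0 1)) (hmono : Monotone F)
    (hF : Tendsto F atTop (𝓝 1)) {x η : ℝ} (hη : 0 < η) (hx : 0 ≤ F (x + η)) :
    1 - F (x + η) ≤ (ℙ {ω | x < quantile F (U ω)}).toReal := by
  refine (ENNReal.ofReal_le_iff_le_toReal (measure_ne_top _ _)).mp ?_
  rw [← Real.volume_Ioo]
  refine volume_le_measure_preimage_of_map_eq hUm hU (s := {u | x < quantile F u})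
    measurableSet_Ioo (Ioo_subset_Ioo_left hx) fun u ⟨hu, hu1⟩ => ?_
  exact (lt_add_of_pos_right x hη).trans_le (le_quantile hmono hF hu hu1)

lemma two_mul_le_toReal_measure_lt_quantile_add [IsFiniteMeasure ℙ] (hUm : AEMeasurable U ℙ)
    (hU : ℙ.map U = volume.restrict (Ioo 0 1)) (hmono : Monotone F)
    (hsupp : ∀ x < 0, F x = 0) (hF : Tendsto F atTop (𝓝 1)) {x η : ℝ} (hη : 0 < η)
    (hx : 1 / 2 ≤ F (x + η)) (hx1 : F (x + η) ≤ 1) :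
    2 * (1 - F (x + η)) ≤ (ℙ {ω | x < quantile F (U ω) + quantile F (1 - U ω)}).toReal := by
  set y := F (x + η)
  have hlt : ∀ {u}, y < u → u < 1 → x < quantile F u := fun hu hu1 =>
    (lt_add_of_pos_right x hη).trans_le (le_quantile hmono hF hu hu1)
  have hsub : Ioo y 1 ∪ Ioo 0 (1 - y) ⊆ {u | x < quantile F u + quantile F (1 - u)} := by
    rintro u (⟨hyu, hu1⟩ | ⟨hu0, huy⟩)
    · have := quantile_nonneg hsupp (sub_pos.mpr hu1)
      exact (hlt hyu hu1).trans_le (le_add_of_nonneg_right this)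
    · have := quantile_nonneg hsupp hu0
      exact (hlt (by linarith) (by linarith)).trans_le (le_add_of_nonneg_left this)
  have hdisj : Disjoint (Ioo y 1) (Ioo 0 (1 - y)) :=
    disjoint_left.mpr fun u ⟨hyu, _⟩ ⟨_, huy⟩ => by linarith
  refine (ENNReal.ofReal_le_iff_le_toReal (measure_ne_top _ _)).mp ?_
  rw [← volume_Ioo_add_volume_Ioo_one_sub hx1, ← measure_union hdisj measurableSet_Ioo]
  exact volume_le_measure_preimage_of_map_eq hUm hU (measurableSet_Ioo.union measurableSet_Ioo)
    (union_subset (Ioo_subset_Ioo_left (by linarith)) (Ioo_subset_Ioo_right (by linarith))) hsub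

lemma eventually_toReal_measure_lt_quantile_add_le (hUm : AEMeasurable U ℙ)
    (hU : ℙ.map U = volume.restrict (Ioo 0 1)) (hsupp : ∀ x < 0, F x = 0)
    (hle : ∀ x, F x ≤ 1) (hF : Tendsto F atTop (𝓝 1)) (hlow : sInf {x | 0 < F x} = 0)
    {ε : ℝ} (hε : 0 < ε) :
    ∀ᶠ x in atTop, (ℙ {ω | x < quantile F (U ω) + quantile F (1 - U ω)}).toReal ≤
      2 * (1 - F (x - ε)) := by
  obtain ⟨M, hM⟩ := exists_min_quantile_le_or_max_quantile_le hsupp hF hlow hε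
  filter_upwards [eventually_ge_atTop (2 * M)] with x hx
  set y := F (x - ε)
  have hsub : {u | x < quantile F u + quantile F (1 - u)} ∩ Ioo 0 1 ⊆
      Ioo y 1 ∪ Ioo 0 (1 - y) := by
    rintro u ⟨hsum : x < _, hu0, hu1⟩
    rcases hM u ⟨hu0, hu1⟩ with hmin | hmax
    · rcases min_le_iff.mp hmin with h | h
      · have := lt_of_lt_quantile hsupp (sub_pos.mpr hu1) (show x - ε < _ by linarith)
        exact Or.inr ⟨hu0, by linarith⟩
      · exact Or.inl ⟨lt_of_lt_quantile hsupp hu0 (show x - ε < _ by linarith), hu1⟩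
    · obtain ⟨h, h'⟩ := max_le_iff.mp hmax
      linarith
  refine ENNReal.toReal_le_of_le_ofReal (by linarith [hle (x - ε)]) ?_
  rw [← volume_Ioo_add_volume_Ioo_one_sub (hle _)]
  exact (measure_preimage_le_of_map_eq hUm hU hsub).trans (measure_union_le _ _)

variable [IsFiniteMeasure ℙ] {f : ℝ → ℝ} {a : ℝ}

lemma eventually_lt_sum_tail_ratio (hUm : AEMeasurable U ℙ)
    (hU : ℙ.map U = volume.restrict (Ioo 0 1)) (hmono : Monotone F) (hF0 : ∀ x, 0 ≤ F x)
    (hF1 : ∀ x, F x < 1) (hsupp : ∀ x < 0, F x = 0) (hF : Tendsto F atTop (𝓝 1))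
    (ha : 0 < a) (hf : ∀ᶠ x in atTop, a ≤ f x)
    (hMDA : GumbelMDA F f)
    {b : ℝ} (hb : b < 2) :
    ∀ᶠ x in atTop, b < (ℙ {ω | x < quantile F (U ω) + quantile F (1 - U ω)}).toReal /
      (ℙ {ω | x < quantile F (U ω)}).toReal := by
  obtain ⟨c, hc, hshift⟩ := exists_pos_eventually_mul_tail_lt_tail_add hmono hF1 ha hf hMDA
    (L := max (b / 2) 0) (max_lt (by linarith) one_pos)
  filter_upwards [hshift, hF.eventually (eventually_ge_nhds one_half_lt_one)] with x hx hhalf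
  have hXle := toReal_measure_lt_quantile_le hUm hU hsupp (hF1 x).le
  have hXpos : 0 < (ℙ {ω | x < quantile F (U ω)}).toReal :=
    (sub_pos.mpr (hF1 (x + 1))).trans_le
      (le_toReal_measure_lt_quantile hUm hU hmono hF one_pos (hF0 (x + 1)))
  have hsum := two_mul_le_toReal_measure_lt_quantile_add hUm hU hmono hsupp hF hc
    (hhalf.trans (hmono (le_add_of_nonneg_right hc.le))) (hF1 _).le
  rw [lt_div_iff₀ hXpos]
  calc b * _ ≤ 2 * max (b / 2) 0 * _ := by
        gcongr
        linarith [le_max_left (b / 2) 0]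
    _ ≤ 2 * (max (b / 2) 0 * (1 - F x)) := by
        rw [mul_assoc]
        gcongr
    _ < 2 * (1 - F (x + c)) := by gcongr
    _ ≤ _ := hsum

lemma eventually_sum_tail_ratio_lt (hUm : AEMeasurable U ℙ)
    (hU : ℙ.map U = volume.restrict (Ioo 0 1)) (hmono : Monotone F) (hF0 : ∀ x, 0 ≤ F x)
    (hF1 : ∀ x, F x < 1) (hsupp : ∀ x < 0, F x = 0) (hF : Tendsto F atTop (𝓝 1))
    (hlow : sInf {x | 0 < F x} = 0) (ha : 0 < a) (hf : ∀ᶠ x in atTop, a ≤ f x)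
    (hMDA : GumbelMDA F f)
    {b : ℝ} (hb : 2 < b) :
    ∀ᶠ x in atTop, (ℙ {ω | x < quantile F (U ω) + quantile F (1 - U ω)}).toReal /
      (ℙ {ω | x < quantile F (U ω)}).toReal < b := by
  obtain ⟨c, hc, hshift⟩ := exists_pos_eventually_tail_sub_lt_mul_tail hmono hF1 ha hf hMDA
    (L := b / 2) (by linarith)
  filter_upwards [(tendsto_atTop_add_const_right atTop (c / 2) tendsto_id).eventually hshift,
    eventually_toReal_measure_lt_quantile_add_le hUm hU hsupp (fun x => (hF1 x).le) hF hlow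
      (half_pos hc)] with x hx hsum
  rw [id, show x + c / 2 - c = x - c / 2 by ring] at hx
  have hXge := le_toReal_measure_lt_quantile hUm hU hmono hF (half_pos hc) (hF0 (x + c / 2))
  rw [div_lt_iff₀ (by linarith [hF1 (x + c / 2)])]
  calc _ ≤ 2 * (1 - F (x - c / 2)) := hsum
    _ < 2 * (b / 2 * (1 - F (x + c / 2))) := by gcongr
    _ = b * (1 - F (x + c / 2)) := by ring
    _ ≤ b * _ := by gcongr

end Uniform

theorem stmt_12_general {Ω : Type*} [MeasurableSpace Ω] (ℙ : Measure Ω) [IsProbabilityMeasure ℙ]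
    (F f : ℝ → ℝ) (δ : ℝ) (hδ : 0 < δ)
    (hmono : Monotone F) (hrange : ∀ x, 0 ≤ F x ∧ F x ≤ 1)
    (hsupp : ∀ x < (0:ℝ), F x = 0)
    (hlow : sInf {x : ℝ | 0 < F x} = 0)
    (hend : ∀ x, F x < 1)
    (hfpos : ∀ x, 0 < f x)
    (hliminf : Filter.liminf f atTop = δ)
    (hMDA : ∀ x : ℝ, Tendsto (fun t => (1 - F (t + x * f t)) / (1 - F t))
      atTop (nhds (Real.exp (-x))))
    (U : Ω → ℝ) (hUm : Measurable U)
    (hU : Measure.map U ℙ = volume.restrict (Set.Ioo (0:ℝ) 1))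
    (Finv : ℝ → ℝ) (hFinv : ∀ p, Finv p = sInf {x : ℝ | p ≤ F x})
    (X Y : Ω → ℝ)
    (hX : ∀ ω, X ω = Finv (U ω)) (hY : ∀ ω, Y ω = Finv (1 - U ω)) :
    Tendsto (fun x =>
      (ℙ {ω | X ω + Y ω > x}).toReal / (ℙ {ω | X ω > x}).toReal)
      atTop (nhds 2) := by
  obtain rfl : Finv = quantile F := funext hFinv
  obtain rfl : X = fun ω => quantile F (U ω) := funext hX
  obtain rfl : Y = fun ω => quantile F (1 - U ω) := funext hY
  beta_reduce
  have hF : Tendsto F atTop (𝓝 1) :=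
    tendsto_atTop_one_of_tendsto_tail_ratio hmono (fun x => (hend x).le) (fun x => (hfpos x).le)
      (exp_lt_one_iff.mpr (by norm_num : (-1 : ℝ) < 0)).ne (by simpa using hMDA 1)
  have hf : ∀ᶠ x in atTop, δ / 2 ≤ f x :=
    (eventually_lt_of_lt_liminf (by rw [hliminf]; linarith)
      (isBoundedUnder_of ⟨0, fun x => (hfpos x).le⟩)).mono fun _ => le_of_lt
  have hUm' : AEMeasurable U ℙ := hUm.aemeasurable
  have hF0 x : 0 ≤ F x := (hrange x).1
  exact tendsto_order.2
    ⟨fun b hb => eventually_lt_sum_tail_ratio hUm' hU hmono hF0 hend hsupp hF (half_pos hδ) hf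
      hMDA hb,
     fun b hb => eventually_sum_tail_ratio_lt hUm' hU hmono hF0 hend hsupp hF hlow (half_pos hδ)
      hf hMDA hb⟩

/-- Let `F ∈ MDA(Λ)` with auxiliary function `f` having `liminf f = δ > 0`, supported on
`[0,∞)` with lower endpoint `0` and infinite right endpoint. For `U ~ Uniform(0,1)`,
`X = F⁻¹(U)` and `Y = F⁻¹(1-U)` (generalized inverses, countermonotonic), one has
`P(X + Y > x) ∼ 2 P(X > x)`. -/
theorem stmt_12 {Ω : Type*} [MeasurableSpace Ω] (ℙ : Measure Ω) [IsProbabilityMeasure ℙ]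
    (F f : ℝ → ℝ) (δ : ℝ) (hδ : 0 < δ)
    (hmono : Monotone F) (hrange : ∀ x, 0 ≤ F x ∧ F x ≤ 1)
    (hsupp : ∀ x < (0:ℝ), F x = 0)
    (hlow : sInf {x : ℝ | 0 < F x} = 0)
    (hend : ∀ x, F x < 1)
    (hfpos : ∀ x, 0 < f x)
    (hliminf : Filter.liminf f atTop = δ)
    (hself : ∀ x : ℝ, Tendsto (fun t => f (t + x * f t) / f t) atTop (nhds 1))
    (hMDA : ∀ x : ℝ, Tendsto (fun t => (1 - F (t + x * f t)) / (1 - F t))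
      atTop (nhds (Real.exp (-x))))
    (U : Ω → ℝ) (hUm : Measurable U)
    (hU : Measure.map U ℙ = volume.restrict (Set.Ioo (0:ℝ) 1))
    (Finv : ℝ → ℝ) (hFinv : ∀ p, Finv p = sInf {x : ℝ | p ≤ F x})
    (X Y : Ω → ℝ)
    (hX : ∀ ω, X ω = Finv (U ω)) (hY : ∀ ω, Y ω = Finv (1 - U ω)) :
    Tendsto (fun x =>
      (ℙ {ω | X ω + Y ω > x}).toReal / (ℙ {ω | X ω > x}).toReal)
      atTop (nhds 2) :=
  stmt_12_general ℙ F f δ hδ hmono hrange hsupp hlow hend hfpos hliminf hMDA U hUm hU Finv hFinv X Y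
    hX hY
end

section
/- Let (X₁, X₂) be bivariate normal, each with mean μ, variance σ² > 0, and correlation ρ ∈ (-1,1). Set X = exp(X₁), Y = exp(X₂), and f(x) = σ² x/(log x - μ). Then for every t > 0, lim_{x→∞} P(X > x, Y > t f(x))/P(X > x) = 0. -/
/-!
On the event `{X > x, Y > t f(x)}` we have `X₁ + X₂ > log (x t f(x)) = 2μ + σ ℓ(u)`, where
`u = (log x - μ)/σ` and `ℓ(u) = 2u + (log (tσ) - log u)/σ ~ 2u`. Since
`(X₁ + X₂ - 2μ)/σ = (1 + ρ) Z₁ + √(1 - ρ²) Z₂` is centred Gaussian with variance `2(1 + ρ)`, the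
Chernoff bound makes the numerator at most `exp (-ℓ(u)² / (4(1 + ρ))) ≈ exp (-u² / (1 + ρ))`,
whereas the denominator `P(Z₁ > u)` is at least `φ(u + 1) ≈ exp (-u²/2)`. As `1 + ρ < 2`, the
ratio tends to `0`.
-/

open MeasureTheory Filter Real ProbabilityTheory Set
open scoped NNReal Topology

lemma hasSubgaussianMGF_of_map_eq_gaussianReal {Ω : Type*} [MeasurableSpace Ω] {P : Measure Ω}
    [NeZero P] {X : Ω → ℝ} {v : ℝ≥0} (hX : P.map X = gaussianReal 0 v) :
    HasSubgaussianMGF X v P where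
  integrable_exp_mul t := mgf_pos_iff.mp (by rw [mgf_gaussianReal hX]; positivity)
  mgf_le t := by rw [mgf_gaussianReal hX]; simp

lemma measureReal_ge_mul_add_mul_le {Ω : Type*} [MeasurableSpace Ω] {P : Measure Ω}
    [NeZero P] {Z₁ Z₂ : Ω → ℝ} (hZ₁ : P.map Z₁ = gaussianReal 0 1)
    (hZ₂ : P.map Z₂ = gaussianReal 0 1) (hindep : IndepFun Z₁ Z₂ P) (a b : ℝ) {ε : ℝ}
    (hε : 0 ≤ ε) :
    P.real {ω | ε ≤ a * Z₁ ω + b * Z₂ ω} ≤ exp (-ε ^ 2 / (2 * (a ^ 2 + b ^ 2))) := by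
  have h := ((hasSubgaussianMGF_of_map_eq_gaussianReal hZ₁).const_mul a).add_of_indepFun
    ((hasSubgaussianMGF_of_map_eq_gaussianReal hZ₂).const_mul b)
    (hindep.comp (measurable_const_mul a) (measurable_const_mul b))
  refine (h.measure_ge_le hε).trans_eq ?_
  congr 3
  exact congrArg₂ (· + ·) (mul_one (a ^ 2)) (mul_one (b ^ 2))

lemma gaussianPDFReal_add_one_le_gaussianReal_Ioi {d : ℝ} (hd : 0 ≤ d) :
    gaussianPDFReal 0 1 (d + 1) ≤ (gaussianReal 0 1).real (Ioi d) := by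
  have hpdf : ∀ x ∈ Ioc d (d + 1), gaussianPDFReal 0 1 (d + 1) ≤ gaussianPDFReal 0 1 x := by
    rintro x ⟨hdx, hx⟩
    simp only [gaussianPDFReal, NNReal.coe_one, sub_zero]
    gcongr
    nlinarith
  calc gaussianPDFReal 0 1 (d + 1)
      = volume.real (Ioc d (d + 1)) • gaussianPDFReal 0 1 (d + 1) := by simp
    _ ≤ ∫ x in Ioc d (d + 1), gaussianPDFReal 0 1 x :=
      setIntegral_ge_of_const_le measurableSet_Ioc (by simp) hpdf
        (integrable_gaussianPDFReal 0 1).integrableOn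
    _ = (gaussianReal 0 1).real (Ioc d (d + 1)) := by
      rw [measureReal_def, gaussianReal_apply_eq_integral 0 one_ne_zero,
        ENNReal.toReal_ofReal (setIntegral_nonneg measurableSet_Ioc
          (fun x _ => gaussianPDFReal_nonneg 0 1 x))]
    _ ≤ (gaussianReal 0 1).real (Ioi d) := measureReal_mono Ioc_subset_Ioi_self

lemma tendsto_exp_div_gaussianPDFReal {v k : ℝ} (hv : 0 < v) (hk : v < k ^ 2) {ℓ : ℝ → ℝ}
    (hℓ : Tendsto (fun u => ℓ u / u) atTop (𝓝 k)) :
    Tendsto (fun u => exp (-ℓ u ^ 2 / (2 * v)) / gaussianPDFReal 0 1 (u + 1)) atTop (𝓝 0) := by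
  have hlim : Tendsto (fun u => (1 + u⁻¹) ^ 2 / 2 - (ℓ u / u) ^ 2 / (2 * v)) atTop
      (𝓝 (1 / 2 - k ^ 2 / (2 * v))) := by
    simpa using (((tendsto_const_nhds (x := (1 : ℝ))).add tendsto_inv_atTop_zero).pow 2
      |>.div_const 2).sub ((hℓ.pow 2).div_const (2 * v))
  have hneg : 1 / 2 - k ^ 2 / (2 * v) < 0 := by
    rw [sub_neg, div_lt_div_iff₀ two_pos (by positivity)]
    linarith
  have hexponent : Tendsto (fun u => (u + 1) ^ 2 / 2 - ℓ u ^ 2 / (2 * v)) atTop atBot := by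
    refine ((tendsto_pow_atTop two_ne_zero).atTop_mul_neg hneg hlim).congr' ?_
    filter_upwards [eventually_ne_atTop 0] with u hu
    field_simp
  have hratio : ∀ u, exp (-ℓ u ^ 2 / (2 * v)) / gaussianPDFReal 0 1 (u + 1)
      = √(2 * π) * exp ((u + 1) ^ 2 / 2 - ℓ u ^ 2 / (2 * v)) := by
    intro u
    simp only [gaussianPDFReal, NNReal.coe_one, mul_one, sub_zero, exp_sub, neg_div, exp_neg]
    field_simp
  simpa [hratio] using (tendsto_exp_atBot.comp hexponent).const_mul (√(2 * π))

lemma tendsto_mul_add_sub_log_div_self (k c σ : ℝ) :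
    Tendsto (fun u => (k * u + (c - log u) / σ) / u) atTop (𝓝 k) := by
  have hlog : Tendsto (fun u => log u / u) atTop (𝓝 0) := by
    simpa using tendsto_pow_log_div_mul_add_atTop 1 0 1 one_ne_zero
  have h := (tendsto_const_nhds (x := k)).add
    ((tendsto_inv_atTop_zero.const_mul (c / σ)).sub (hlog.div_const σ))
  rw [mul_zero, zero_div, sub_zero, add_zero] at h
  refine h.congr' ?_
  filter_upwards [eventually_ne_atTop 0] with u hu
  field_simp

lemma log_mul_lt_add_of_lt_exp {x y a b : ℝ} (hx : 0 < x) (hy : 0 < y) (hxa : x < exp a)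
    (hyb : y < exp b) : log (x * y) < a + b := by
  rw [log_lt_iff_lt_exp (by positivity), exp_add]
  exact mul_lt_mul'' hxa hyb hx.le hy.le

lemma log_mul_mul_div_log_sub_eq {μ σ t x u : ℝ} (hσ : 0 < σ) (ht : 0 < t) (hx : 0 < x)
    (hu : 0 < u) (hxu : log x = μ + σ * u) :
    log (x * (t * (σ ^ 2 * x / (log x - μ))))
      = 2 * μ + σ * (2 * u + (log (t * σ) - log u) / σ) := by
  have hσu : log x - μ = σ * u := by linarith
  rw [hσu, log_mul hx.ne' (by positivity), log_mul ht.ne' (by positivity),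
    log_div (by positivity) (by positivity), log_mul (by positivity) hx.ne',
    log_mul hσ.ne' hu.ne', log_mul ht.ne' hσ.ne', log_pow, hxu]
  field_simp
  push_cast
  ring

lemma measureReal_lt_exp_add_mul_eq {Ω : Type*} [MeasurableSpace Ω] {P : Measure Ω} {Z : Ω → ℝ}
    (hZm : Measurable Z) {μ σ x : ℝ} (hσ : 0 < σ) (hx : 0 < x) :
    P.real {ω | x < exp (μ + σ * Z ω)} = (P.map Z).real (Ioi ((log x - μ) / σ)) := by
  have hset : {ω | x < exp (μ + σ * Z ω)} = Z ⁻¹' Ioi ((log x - μ) / σ) := by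
    ext ω
    rw [mem_ofPred_eq, ← log_lt_iff_lt_exp hx, mem_preimage, mem_Ioi, div_lt_iff₀' hσ]
    constructor <;> intro h <;> linarith
  rw [hset, map_measureReal_apply hZm measurableSet_Ioi]

lemma measureReal_lt_exp_and_lt_exp_le {Ω : Type*} [MeasurableSpace Ω] {P : Measure Ω}
    [IsProbabilityMeasure P] {Z₁ Z₂ : Ω → ℝ} (hZ₁ : P.map Z₁ = gaussianReal 0 1)
    (hZ₂ : P.map Z₂ = gaussianReal 0 1) (hindep : IndepFun Z₁ Z₂ P) {μ σ ρ x y s : ℝ}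
    (hσ : 0 < σ) (hρ : ρ ^ 2 ≤ 1) (hx : 0 < x) (hy : 0 < y) (hxy : log (x * y) = 2 * μ + σ * s)
    (hs : 0 ≤ s) :
    P.real {ω | x < exp (μ + σ * Z₁ ω) ∧ y < exp (μ + σ * (ρ * Z₁ ω + √(1 - ρ ^ 2) * Z₂ ω))}
      ≤ exp (-s ^ 2 / (2 * (2 * (1 + ρ)))) := by
  have hvar : 2 * (1 + ρ) = (1 + ρ) ^ 2 + √(1 - ρ ^ 2) ^ 2 := by
    rw [sq_sqrt (by linarith)]
    ring
  rw [hvar]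
  refine (measureReal_mono fun ω hω => ?_).trans
    (measureReal_ge_mul_add_mul_le hZ₁ hZ₂ hindep _ _ hs)
  have h := log_mul_lt_add_of_lt_exp hx hy hω.1 hω.2
  rw [hxy] at h
  have hσs : σ * s < σ * ((1 + ρ) * Z₁ ω + √(1 - ρ ^ 2) * Z₂ ω) := by linarith
  exact (lt_of_mul_lt_mul_left hσs hσ.le).le

theorem stmt_13_general {Ω : Type*} [MeasurableSpace Ω] (μpr : Measure Ω) [IsProbabilityMeasure μpr]
    (μ σ ρ : ℝ) (hσ : 0 < σ) (hρ : -1 < ρ ∧ ρ < 1)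
    (Z₁ Z₂ : Ω → ℝ) (hZ₁m : Measurable Z₁)
    (hZ₁ : Measure.map Z₁ μpr = gaussianReal 0 1)
    (hZ₂ : Measure.map Z₂ μpr = gaussianReal 0 1)
    (hindep : IndepFun Z₁ Z₂ μpr)
    (X₁ X₂ : Ω → ℝ)
    (hX₁ : ∀ ω, X₁ ω = μ + σ * Z₁ ω)
    (hX₂ : ∀ ω, X₂ ω = μ + σ * (ρ * Z₁ ω + Real.sqrt (1 - ρ^2) * Z₂ ω))
    (X Y : Ω → ℝ)
    (hX : ∀ ω, X ω = Real.exp (X₁ ω)) (hY : ∀ ω, Y ω = Real.exp (X₂ ω))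
    (f : ℝ → ℝ) (hf : ∀ x, f x = σ^2 * x / (Real.log x - μ)) :
    ∀ t > (0:ℝ), Tendsto (fun x =>
      (μpr {ω | X ω > x ∧ Y ω > t * f x}).toReal / (μpr {ω | X ω > x}).toReal)
      atTop (nhds 0) := by
  intro t ht
  obtain ⟨hρ₁, hρ₂⟩ := hρ
  set d : ℝ → ℝ := fun x => (log x - μ) / σ
  set ℓ : ℝ → ℝ := fun u => 2 * u + (log (t * σ) - log u) / σ
  have hd : Tendsto d atTop atTop :=
    (tendsto_atTop_add_const_right _ (-μ) tendsto_log_atTop).atTop_div_const hσ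
  have hℓ : Tendsto (fun u => ℓ u / u) atTop (𝓝 2) := tendsto_mul_add_sub_log_div_self 2 _ σ
  have hℓ_nonneg : ∀ᶠ u in atTop, 0 ≤ ℓ u := by
    refine ((tendsto_id.atTop_mul_pos two_pos hℓ).congr' ?_).eventually_ge_atTop 0
    filter_upwards [eventually_ne_atTop 0] with u hu
    exact mul_div_cancel₀ _ hu
  have hbound : ∀ᶠ x in atTop,
      (μpr {ω | X ω > x ∧ Y ω > t * f x}).toReal / (μpr {ω | X ω > x}).toReal
        ≤ exp (-ℓ (d x) ^ 2 / (2 * (2 * (1 + ρ)))) / gaussianPDFReal 0 1 (d x + 1) := by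
    filter_upwards [eventually_gt_atTop 0, hd.eventually_gt_atTop 0, hd.eventually hℓ_nonneg]
      with x hx hdx hℓx
    have hlogx : log x = μ + σ * d x := by rw [mul_div_cancel₀ _ hσ.ne']; ring
    have hfx : 0 < t * f x := by
      rw [hf, hlogx, add_sub_cancel_left]
      positivity
    have hden := gaussianPDFReal_add_one_le_gaussianReal_Ioi hdx.le
    rw [← hZ₁, ← measureReal_lt_exp_add_mul_eq hZ₁m hσ hx] at hden
    simp only [gt_iff_lt, hX, hY, hX₁, hX₂, ← measureReal_def]
    refine div_le_div₀ (exp_pos _).le ?_ (gaussianPDFReal_pos _ _ _ one_ne_zero) hden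
    exact measureReal_lt_exp_and_lt_exp_le hZ₁ hZ₂ hindep hσ (by nlinarith) hx hfx
      (by rw [hf]; exact log_mul_mul_div_log_sub_eq hσ ht hx hdx hlogx) hℓx
  exact squeeze_zero' (Eventually.of_forall fun x => by positivity) hbound
    ((tendsto_exp_div_gaussianPDFReal (by linarith) (by nlinarith) hℓ).comp hd)

/-- Let `(X₁,X₂)` be bivariate normal with means `μ`, variances `σ² > 0`, correlation
`ρ ∈ (-1,1)` (constructed from independent standard normals `Z₁, Z₂`), and set
`X = exp(X₁)`, `Y = exp(X₂)`, `f(x) = σ²x/(log x - μ)`. Then for every `t > 0`,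
`P(X > x, Y > t f(x))/P(X > x) → 0` as `x → ∞`. -/
theorem stmt_13 {Ω : Type*} [MeasurableSpace Ω] (μpr : Measure Ω) [IsProbabilityMeasure μpr]
    (μ σ ρ : ℝ) (hσ : 0 < σ) (hρ : -1 < ρ ∧ ρ < 1)
    (Z₁ Z₂ : Ω → ℝ) (hZ₁m : Measurable Z₁) (hZ₂m : Measurable Z₂)
    (hZ₁ : Measure.map Z₁ μpr = gaussianReal 0 1)
    (hZ₂ : Measure.map Z₂ μpr = gaussianReal 0 1)
    (hindep : IndepFun Z₁ Z₂ μpr)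
    (X₁ X₂ : Ω → ℝ)
    (hX₁ : ∀ ω, X₁ ω = μ + σ * Z₁ ω)
    (hX₂ : ∀ ω, X₂ ω = μ + σ * (ρ * Z₁ ω + Real.sqrt (1 - ρ^2) * Z₂ ω))
    (X Y : Ω → ℝ)
    (hX : ∀ ω, X ω = Real.exp (X₁ ω)) (hY : ∀ ω, Y ω = Real.exp (X₂ ω))
    (f : ℝ → ℝ) (hf : ∀ x, f x = σ^2 * x / (Real.log x - μ)) :
    ∀ t > (0:ℝ), Tendsto (fun x =>
      (μpr {ω | X ω > x ∧ Y ω > t * f x}).toReal / (μpr {ω | X ω > x}).toReal)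
      atTop (nhds 0) :=
  stmt_13_general μpr μ σ ρ hσ hρ Z₁ Z₂ hZ₁m hZ₁ hZ₂ hindep X₁ X₂ hX₁ hX₂ X Y hX hY f hf
end

section
/- Let F̄(x) = exp(-x^α) for x > 0 with α ∈ (0,1), a von Mises function with auxiliary function f(x) = x^{1-α}/α. Then for every L > 0, lim_{x→∞} (1-F(L f(x)))²/(1-F(x)) = exp(x^α (1 - 2(L/α)^α x^{-α²})) → ∞; i.e., the joint-tail sufficient condition fails for every L, even though F is subexponential and P(X+Y>x) ∼ 2P(X>x) for X,Y i.i.d. ~ F. -/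
/-!
The first part is a computation: `(L f(x))^α = (L/α)^α x^(α - α²)`, and `α² > 0`.

For the second, split `{X + Y > x}` according to `X ≤ x/2`, `Y ≤ x/2` (equally likely by
symmetry) or `X, Y > x/2`. The last event has probability
`exp(-2^(1-α) x^α) = o(exp(-x^α))`. On `{X = a ≤ x/2}` the ratio
`F̄(x - a)/F̄(x) = exp(x^α - (x-a)^α)` tends to `1` and, by concavity of `t ↦ t^α`, is bounded by
`exp(α a^α)`, which is integrable against the law of `X` precisely because `α < 1`; dominated
convergence then gives `P(X + Y > x, X ≤ x/2) ∼ F̄(x)`.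
-/

open MeasureTheory Filter Real ProbabilityTheory Set Topology
open scoped ENNReal

lemma rpow_add_le_rpow_add_mul {α u y : ℝ} (hu : 0 < u) (hy : 0 ≤ y) (hα0 : 0 ≤ α)
    (hα1 : α ≤ 1) : (u + y) ^ α ≤ u ^ α + α * y * u ^ (α - 1) := by
  have hbernoulli : (1 + y / u) ^ α ≤ 1 + α * (y / u) :=
    rpow_one_add_le_one_add_mul_self (by linarith [div_nonneg hy hu.le]) hα0 hα1
  calc (u + y) ^ α = u ^ α * (1 + y / u) ^ α := by
        rw [← mul_rpow hu.le (by positivity), mul_add, mul_div_cancel₀ _ hu.ne', mul_one]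
    _ ≤ u ^ α * (1 + α * (y / u)) := by gcongr
    _ = u ^ α + α * y * u ^ (α - 1) := by rw [rpow_sub_one hu.ne']; ring

lemma rpow_add_sub_rpow_le {α u y : ℝ} (hy : 0 < y) (hyu : y ≤ u) (hα0 : 0 ≤ α)
    (hα1 : α ≤ 1) : (u + y) ^ α - u ^ α ≤ α * y ^ α := by
  have hpow : u ^ (α - 1) ≤ y ^ (α - 1) := rpow_le_rpow_of_nonpos hy hyu (by linarith)
  have hy_pow : y * y ^ (α - 1) = y ^ α := by rw [rpow_sub_one hy.ne']; field_simp
  have := rpow_add_le_rpow_add_mul (hy.trans_le hyu) hy.le hα0 hα1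
  nlinarith [mul_le_mul_of_nonneg_left hpow (mul_nonneg hα0 hy.le)]

lemma tendsto_rpow_sub_rpow_sub_const {α : ℝ} (hα0 : 0 ≤ α) (hα1 : α < 1) {a : ℝ}
    (ha : 0 ≤ a) : Tendsto (fun x : ℝ => x ^ α - (x - a) ^ α) atTop (𝓝 0) := by
  have hupper : Tendsto (fun x : ℝ => α * a * (x - a) ^ (α - 1)) atTop (𝓝 0) := by
    have h := ((tendsto_rpow_neg_atTop (y := 1 - α) (by linarith)).comp
      (tendsto_atTop_add_const_right _ (-a) tendsto_id)).const_mul (α * a)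
    simpa [neg_sub, sub_eq_add_neg] using h
  refine tendsto_of_tendsto_of_tendsto_of_le_of_le' tendsto_const_nhds hupper ?_ ?_
  · filter_upwards [eventually_ge_atTop a] with x hx
    linarith [rpow_le_rpow (by linarith) (by linarith : x - a ≤ x) hα0]
  · filter_upwards [eventually_gt_atTop a] with x hx
    have := rpow_add_le_rpow_add_mul (by linarith : 0 < x - a) ha hα0 hα1.le
    rw [sub_add_cancel] at this
    linarith

lemma weibull_tail_sq_div_tail_eq {α L : ℝ} (hα : 0 < α) (hL : 0 < L) {F f : ℝ → ℝ}
    (hFbar : ∀ x : ℝ, 0 < x → 1 - F x = exp (-(x ^ α)))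
    (hf : ∀ x, f x = x ^ (1 - α) / α) {x : ℝ} (hx : 0 < x) :
    (1 - F (L * f x)) ^ 2 / (1 - F x)
      = exp (x ^ α * (1 - 2 * (L / α) ^ α * x ^ (-(α ^ 2)))) := by
  have hLf : L * f x = L / α * x ^ (1 - α) := by rw [hf]; ring
  have hLf_pow : (L * f x) ^ α = (L / α) ^ α * (x ^ α * x ^ (-(α ^ 2))) := by
    rw [hLf, mul_rpow (by positivity) (by positivity), ← rpow_mul hx.le, ← rpow_add hx]
    ring_nf
  rw [hFbar _ (by rw [hLf]; positivity), hFbar _ hx, hLf_pow, ← exp_nat_mul, ← exp_sub]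
  congr 1
  push_cast
  ring

lemma tendsto_exp_rpow_mul_one_sub_atTop {α β : ℝ} (hα : 0 < α) (hβ : 0 < β) (c : ℝ) :
    Tendsto (fun x : ℝ => exp (x ^ α * (1 - c * x ^ (-β)))) atTop atTop := by
  refine tendsto_exp_atTop.comp ((tendsto_rpow_atTop hα).atTop_mul_pos one_pos ?_)
  simpa using ((tendsto_rpow_neg_atTop hβ).const_mul c).const_sub 1

section SumOfTwoCoordinates

variable (ν : Measure ℝ) [SFinite ν] (x : ℝ)

lemma measurableSet_setOf_lt_add_fst_le_half :
    MeasurableSet {p : ℝ × ℝ | x < p.1 + p.2 ∧ p.1 ≤ x / 2} :=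
  (measurableSet_lt (f := fun _ => x) measurable_const (by fun_prop)).inter
    (measurableSet_le (g := fun _ => x / 2) measurable_fst measurable_const)

lemma prod_setOf_lt_add_fst_le_half :
    (ν.prod ν) {p : ℝ × ℝ | x < p.1 + p.2 ∧ p.1 ≤ x / 2}
      = ∫⁻ a in Iic (x / 2), ν (Ioi (x - a)) ∂ν := by
  rw [Measure.prod_apply (measurableSet_setOf_lt_add_fst_le_half x),
    ← lintegral_indicator measurableSet_Iic]
  refine lintegral_congr fun a => ?_
  by_cases ha : a ≤ x / 2
  · rw [indicator_of_mem (mem_Iic.mpr ha)]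
    congr 1
    ext b
    simp only [mem_preimage, mem_ofPred_eq, mem_Ioi, ha, and_true]
    constructor <;> intro h <;> linarith
  · rw [indicator_of_notMem (by simpa using ha)]
    simp [ha]

lemma prod_setOf_lt_add_eq :
    (ν.prod ν) {p : ℝ × ℝ | x < p.1 + p.2}
      = 2 * ∫⁻ a in Iic (x / 2), ν (Ioi (x - a)) ∂ν + ν (Ioi (x / 2)) * ν (Ioi (x / 2)) := by
  set S₁ := {p : ℝ × ℝ | x < p.1 + p.2 ∧ p.1 ≤ x / 2}
  have hS₁ : MeasurableSet S₁ := measurableSet_setOf_lt_add_fst_le_half x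
  have hsplit : {p : ℝ × ℝ | x < p.1 + p.2}
      = (S₁ ∪ Prod.swap ⁻¹' S₁) ∪ Ioi (x / 2) ×ˢ Ioi (x / 2) := by
    ext p
    simp only [S₁, mem_union, mem_preimage, mem_ofPred_eq, Prod.fst_swap, Prod.snd_swap,
      mem_prod, mem_Ioi]
    constructor
    · intro h
      by_contra! hc
      linarith [hc.1.2 (by linarith), hc.2 (hc.1.1 h)]
    · rintro ((⟨h, -⟩ | ⟨h, -⟩) | ⟨h₁, h₂⟩) <;> linarith
  have hdisj₁₂ : Disjoint S₁ (Prod.swap ⁻¹' S₁) := by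
    refine disjoint_left.mpr fun p ⟨hp, hp₁⟩ ⟨_, hp₂⟩ => ?_
    simp only [Prod.fst_swap] at hp₂
    linarith
  have hdisj₃ : Disjoint (S₁ ∪ Prod.swap ⁻¹' S₁) (Ioi (x / 2) ×ˢ Ioi (x / 2)) := by
    refine disjoint_left.mpr fun p hp ⟨hq₁, hq₂⟩ => ?_
    rcases hp with ⟨-, hp⟩ | ⟨-, hp⟩
    · exact hp.not_gt hq₁
    · exact hp.not_gt hq₂
  rw [hsplit, measure_union hdisj₃ (measurableSet_Ioi.prod measurableSet_Ioi),
    measure_union hdisj₁₂ (measurable_swap hS₁), ← Measure.map_apply measurable_swap hS₁,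
    Measure.prod_swap, prod_setOf_lt_add_fst_le_half, Measure.prod_prod, two_mul]

end SumOfTwoCoordinates

def HasWeibullTail (ν : Measure ℝ) (α : ℝ) : Prop :=
  ∀ t, 0 < t → ν (Ioi t) = ENNReal.ofReal (exp (-(t ^ α)))

namespace HasWeibullTail

variable {ν : Measure ℝ} {α : ℝ}

lemma measure_Ioi_div_measure_Ioi (h : HasWeibullTail ν α) {s t : ℝ} (hs : 0 < s)
    (ht : 0 < t) : ν (Ioi s) / ν (Ioi t) = ENNReal.ofReal (exp (t ^ α - s ^ α)) := by
  rw [h s hs, h t ht, ← ENNReal.ofReal_div_of_pos (exp_pos _), ← exp_sub, neg_sub_neg]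

lemma measure_Iic_zero [IsProbabilityMeasure ν] (h : HasWeibullTail ν α) (hα : 0 < α) :
    ν (Iic 0) = 0 := by
  have hlim : Tendsto (fun t : ℝ => ENNReal.ofReal (exp (-(t ^ α)))) (𝓝[>] 0) (𝓝 1) := by
    have hcont : ContinuousAt (fun t : ℝ => ENNReal.ofReal (exp (-(t ^ α)))) 0 :=
      ENNReal.continuous_ofReal.continuousAt.comp
        (continuous_exp.continuousAt.comp (continuousAt_rpow_const 0 α (Or.inr hα.le)).neg)
    simpa [zero_rpow hα.ne'] using hcont.tendsto.mono_left nhdsWithin_le_nhds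
  have hIoi : 1 ≤ ν (Ioi 0) := by
    refine le_of_tendsto hlim ?_
    filter_upwards [self_mem_nhdsWithin] with t ht
    exact h t ht ▸ measure_mono (Ioi_subset_Ioi (ht.le))
  rw [← compl_Ioi, prob_compl_eq_zero_iff measurableSet_Ioi]
  exact le_antisymm prob_le_one hIoi

lemma ae_pos [IsProbabilityMeasure ν] (h : HasWeibullTail ν α) (hα : 0 < α) :
    ∀ᵐ a ∂ν, 0 < a := by
  rw [ae_iff]
  simp only [not_lt]
  exact h.measure_Iic_zero hα

lemma measure_exp_mul_rpow_gt_le [IsProbabilityMeasure ν] (h : HasWeibullTail ν α)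
    (hα : 0 < α) {β : ℝ} (hβ : 0 < β) {t : ℝ} (ht : 1 < t) :
    ν {a | t < exp (β * a ^ α)} ≤ ENNReal.ofReal (t ^ (-(1 / β))) := by
  have hlog : 0 < log t / β := div_pos (log_pos ht) hβ
  set s := (log t / β) ^ (1 / α)
  have hs : 0 < s := rpow_pos_of_pos hlog _
  have hs_pow : s ^ α = log t / β := by
    rw [← rpow_mul hlog.le, one_div_mul_cancel hα.ne', rpow_one]
  have hsub : {a | t < exp (β * a ^ α)} ⊆ Iic 0 ∪ Ioi s := by
    intro a ha
    rcases le_or_gt a 0 with ha0 | ha0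
    · exact Or.inl ha0
    · have hlog_lt : log t < β * a ^ α := (log_lt_iff_lt_exp (by linarith)).mpr ha
      refine Or.inr ((rpow_lt_rpow_iff hs.le ha0.le hα).mp ?_)
      rw [hs_pow, div_lt_iff₀ hβ]
      linarith
  calc ν {a | t < exp (β * a ^ α)} ≤ ν (Iic 0) + ν (Ioi s) :=
        (measure_mono hsub).trans (measure_union_le _ _)
    _ = ENNReal.ofReal (t ^ (-(1 / β))) := by
        rw [h.measure_Iic_zero hα, h s hs, zero_add, hs_pow, rpow_def_of_pos (by linarith)]
        congr 2
        ring

lemma lintegral_exp_mul_rpow_ne_top [IsProbabilityMeasure ν] (h : HasWeibullTail ν α)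
    (hα : 0 < α) {β : ℝ} (hβ0 : 0 < β) (hβ1 : β < 1) :
    ∫⁻ a, ENNReal.ofReal (exp (β * a ^ α)) ∂ν ≠ ∞ := by
  have hmeas : Measurable fun a : ℝ => exp (β * a ^ α) := by fun_prop
  rw [lintegral_eq_lintegral_meas_lt ν (ae_of_all _ fun a => (exp_pos _).le) hmeas.aemeasurable,
    ← Ioc_union_Ioi_eq_Ioi zero_le_one, lintegral_union measurableSet_Ioi Ioc_disjoint_Ioi_same]
  refine ENNReal.add_ne_top.mpr ⟨?_, ?_⟩
  · refine ne_top_of_le_ne_top ?_ (lintegral_mono fun _ => prob_le_one)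
    simp
  · have hint : IntegrableOn (fun t : ℝ => t ^ (-(1 / β))) (Ioi 1) :=
      integrableOn_Ioi_rpow_of_lt (by rw [neg_lt_neg_iff, lt_one_div one_pos hβ0]; simpa) one_pos
    refine ne_top_of_le_ne_top hint.lintegral_lt_top.ne (setLIntegral_mono (by fun_prop) ?_)
    exact fun t ht => h.measure_exp_mul_rpow_gt_le hα hβ0 ht

lemma tendsto_setLIntegral_div_measure_Ioi [IsProbabilityMeasure ν] (h : HasWeibullTail ν α)
    (hα0 : 0 < α) (hα1 : α < 1) :
    Tendsto (fun x => (∫⁻ a in Iic (x / 2), ν (Ioi (x - a)) ∂ν) / ν (Ioi x)) atTop (𝓝 1) := by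
  have hmeas : ∀ x, Measurable fun a => ν (Ioi (x - a)) := fun x =>
    Monotone.measurable fun a b hab => measure_mono (Ioi_subset_Ioi (by linarith))
  set g : ℝ → ℝ → ℝ≥0∞ := fun x => (Iic (x / 2)).indicator fun a => ν (Ioi (x - a)) / ν (Ioi x)
  have hg : ∀ {x a}, 0 < a → a ≤ x / 2 → g x a = ENNReal.ofReal (exp (x ^ α - (x - a) ^ α)) :=
    fun {x a} ha hax => by
      simp only [g, indicator_of_mem (mem_Iic.mpr hax)]
      exact h.measure_Ioi_div_measure_Ioi (by linarith) (by linarith)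
  have hint_eq : ∀ x, (∫⁻ a in Iic (x / 2), ν (Ioi (x - a)) ∂ν) / ν (Ioi x) = ∫⁻ a, g x a ∂ν :=
    fun x => by
      simp only [g, div_eq_mul_inv, lintegral_indicator measurableSet_Iic,
        lintegral_mul_const _ (hmeas x)]
  have hg_meas : ∀ x, Measurable (g x) := fun x =>
    ((hmeas x).div_const _).indicator measurableSet_Iic
  have hg_le : ∀ x, ∀ᵐ a ∂ν, g x a ≤ ENNReal.ofReal (exp (α * a ^ α)) := fun x => by
    filter_upwards [h.ae_pos hα0] with a ha
    by_cases hax : a ≤ x / 2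
    · rw [hg ha hax]
      gcongr
      simpa using rpow_add_sub_rpow_le ha (by linarith : a ≤ x - a) hα0.le hα1.le
    · simp [g, hax]
  have hg_lim : ∀ᵐ a ∂ν, Tendsto (fun x => g x a) atTop (𝓝 1) := by
    filter_upwards [h.ae_pos hα0] with a ha
    have hlim := (ENNReal.continuous_ofReal.tendsto _).comp ((continuous_exp.tendsto _).comp
      (tendsto_rpow_sub_rpow_sub_const hα0.le hα1 ha.le))
    rw [Function.comp_def, Function.comp_def, exp_zero, ENNReal.ofReal_one] at hlim
    refine hlim.congr' ?_
    filter_upwards [eventually_ge_atTop (2 * a)] with x hx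
    exact (hg ha (by linarith)).symm
  simpa [hint_eq] using tendsto_lintegral_filter_of_dominated_convergence _
    (.of_forall hg_meas) (.of_forall hg_le) (h.lintegral_exp_mul_rpow_ne_top hα0 hα0 hα1) hg_lim

lemma tendsto_measure_Ioi_half_sq_div (h : HasWeibullTail ν α) (hα0 : 0 < α) (hα1 : α < 1) :
    Tendsto (fun x => ν (Ioi (x / 2)) * ν (Ioi (x / 2)) / ν (Ioi x)) atTop (𝓝 0) := by
  have h2 : 1 < (2 : ℝ) ^ (1 - α) := one_lt_rpow one_lt_two (by linarith)
  have hexp : Tendsto (fun x : ℝ => (1 - 2 ^ (1 - α)) * x ^ α) atTop atBot :=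
    (tendsto_const_mul_atBot_of_neg (by linarith)).mpr (tendsto_rpow_atTop hα0)
  have hlim := (ENNReal.continuous_ofReal.tendsto _).comp (tendsto_exp_atBot.comp hexp)
  rw [ENNReal.ofReal_zero] at hlim
  refine hlim.congr' ?_
  filter_upwards [eventually_gt_atTop 0] with x hx
  have hhalf : (x / 2) ^ α * 2 = 2 ^ (1 - α) * x ^ α := by
    rw [div_rpow hx.le zero_le_two, rpow_sub zero_lt_two, rpow_one]
    field_simp
  rw [mul_div_assoc, h.measure_Ioi_div_measure_Ioi (half_pos hx) hx, h _ (half_pos hx),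
    ← ENNReal.ofReal_mul (exp_pos _).le, ← exp_add, Function.comp_apply, Function.comp_apply]
  congr 2
  linear_combination hhalf

lemma tendsto_prod_setOf_lt_add_div [IsProbabilityMeasure ν] (h : HasWeibullTail ν α)
    (hα0 : 0 < α) (hα1 : α < 1) :
    Tendsto (fun x => ((ν.prod ν) {p : ℝ × ℝ | x < p.1 + p.2}).toReal / (ν (Ioi x)).toReal)
      atTop (𝓝 2) := by
  have hlim : Tendsto (fun x => (ν.prod ν) {p : ℝ × ℝ | x < p.1 + p.2} / ν (Ioi x))
      atTop (𝓝 2) := by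
    have hsum := (ENNReal.Tendsto.const_mul (a := 2)
      (h.tendsto_setLIntegral_div_measure_Ioi hα0 hα1) (.inr (by norm_num))).add
      (h.tendsto_measure_Ioi_half_sq_div hα0 hα1)
    simpa only [prod_setOf_lt_add_eq, ENNReal.add_div, mul_div_assoc, mul_one, add_zero]
      using hsum
  simpa [Function.comp_def, ENNReal.toReal_div] using
    (ENNReal.tendsto_toReal (ENNReal.ofNat_ne_top (n := 2))).comp hlim

end HasWeibullTail

lemma hasWeibullTail_map {Ω : Type*} [MeasurableSpace Ω] {μ : Measure Ω}
    [IsProbabilityMeasure μ] {X : Ω → ℝ} (hX : Measurable X) {α : ℝ} {F : ℝ → ℝ}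
    (hF : ∀ x, F x = (μ {ω | X ω ≤ x}).toReal)
    (hFbar : ∀ x : ℝ, 0 < x → 1 - F x = exp (-(x ^ α))) :
    HasWeibullTail (μ.map X) α := by
  intro t ht
  have : IsProbabilityMeasure (μ.map X) := Measure.isProbabilityMeasure_map hX.aemeasurable
  rw [← ENNReal.ofReal_toReal (measure_ne_top _ _), ← compl_Iic,
    prob_compl_eq_one_sub measurableSet_Iic,
    ENNReal.toReal_sub_of_le prob_le_one ENNReal.one_ne_top, ENNReal.toReal_one,
    Measure.map_apply hX measurableSet_Iic, ← hFbar t ht, hF]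
  rfl

lemma map_eq_map_of_measure_le_toReal_eq {Ω : Type*} [MeasurableSpace Ω] {μ : Measure Ω}
    [IsFiniteMeasure μ] {X Y : Ω → ℝ} (hX : Measurable X) (hY : Measurable Y)
    (hXY : ∀ x, (μ {ω | X ω ≤ x}).toReal = (μ {ω | Y ω ≤ x}).toReal) :
    μ.map X = μ.map Y := by
  refine Measure.ext_of_Iic _ _ fun x => ?_
  rw [Measure.map_apply hX measurableSet_Iic, Measure.map_apply hY measurableSet_Iic]
  exact (ENNReal.toReal_eq_toReal_iff' (measure_ne_top _ _) (measure_ne_top _ _)).mp (hXY x)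

/-- Heavy-tailed Weibull: `F̄(x) = exp(-x^α)`, `α ∈ (0,1)`, with von Mises auxiliary
function `f(x) = x^{1-α}/α`. For every `L > 0`,
`(F̄(Lf(x)))²/F̄(x) = exp(x^α(1 - 2(L/α)^α x^{-α²})) → ∞`; i.e., the joint-tail
sufficient condition fails for every `L`, even though `F` is subexponential:
`P(X+Y>x) ∼ 2P(X>x)` for `X, Y` i.i.d. with distribution `F`. -/
theorem stmt_15 {Ω : Type*} [MeasurableSpace Ω] (μpr : Measure Ω) [IsProbabilityMeasure μpr]
    (α : ℝ) (hα : 0 < α ∧ α < 1)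
    (F f : ℝ → ℝ)
    (hFbar : ∀ x : ℝ, 0 < x → 1 - F x = Real.exp (-(x ^ α)))
    (hf : ∀ x, f x = x ^ (1 - α) / α)
    (X Y : Ω → ℝ) (hXm : Measurable X) (hYm : Measurable Y)
    (hindep : IndepFun X Y μpr)
    (hXd : ∀ x, F x = (μpr {ω | X ω ≤ x}).toReal)
    (hYd : ∀ x, F x = (μpr {ω | Y ω ≤ x}).toReal) :
    (∀ L > (0:ℝ),
      (∀ x : ℝ, 0 < x →
        (1 - F (L * f x)) ^ 2 / (1 - F x)
          = Real.exp (x ^ α * (1 - 2 * (L / α) ^ α * x ^ (-(α ^ 2))))) ∧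
      Tendsto (fun x => (1 - F (L * f x)) ^ 2 / (1 - F x)) atTop atTop) ∧
    Tendsto (fun x =>
      (μpr {ω | X ω + Y ω > x}).toReal / (μpr {ω | X ω > x}).toReal)
      atTop (nhds 2) := by
  obtain ⟨hα0, hα1⟩ := hα
  refine ⟨fun L hL => ⟨fun x hx => weibull_tail_sq_div_tail_eq hα0 hL hFbar hf hx, ?_⟩, ?_⟩
  · refine (tendsto_exp_rpow_mul_one_sub_atTop hα0 (pow_pos hα0 2) (2 * (L / α) ^ α)).congr' ?_
    filter_upwards [eventually_gt_atTop 0] with x hx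
    exact (weibull_tail_sq_div_tail_eq hα0 hL hFbar hf hx).symm
  have : IsProbabilityMeasure (μpr.map X) := Measure.isProbabilityMeasure_map hXm.aemeasurable
  have hν : HasWeibullTail (μpr.map X) α := hasWeibullTail_map hXm hXd hFbar
  have hXY : μpr.map (fun ω => (X ω, Y ω)) = (μpr.map X).prod (μpr.map X) := by
    rw [(indepFun_iff_map_prod_eq_prod_map_map hXm.aemeasurable hYm.aemeasurable).mp hindep,
      map_eq_map_of_measure_le_toReal_eq hYm hXm fun x => by rw [← hXd, ← hYd]]
  convert hν.tendsto_prod_setOf_lt_add_div hα0 hα1 using 3 with x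
  · rw [← hXY, Measure.map_apply (hXm.prodMk hYm) (measurableSet_lt measurable_const (by fun_prop))]
    rfl
  · rw [Measure.map_apply hXm measurableSet_Ioi]
    rfl
end

section
/- Let (U,V) satisfy: U has distribution F ∈ MDA(Λ) with infinite right endpoint and auxiliary function f; lim_{x→∞} P(V>x)/P(U>x) = c ∈ (0,∞); for all t>0, P(|V| > t f(x) | U > x) → 0 and P(|U| > t f(x) | V > x) → 0; and for some L>0, P(V > Lf(x), U > Lf(x))/P(U>x) → 0. Let a₁ > a₂ > 0. Then P(a₁U + a₂V > x) ∼ P(U > x/a₁) as x → ∞. -/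
/-!
Put `b = a₂ / a₁ < 1` and `y = x / a₁`; the claim becomes `P(U + bV > y) ∼ P(U > y)`.
If `U > y + s f(y)` then `U + bV > y` unless `|V| > (s/b) f(y)`, which is negligible given `U > y`;
this gives the lower bound `e^{-s}`. Conversely, if `U + bV > y` then either `U > y - b t f(y)`
(probability `∼ e^{bt} P(U > y)`), or `|V| > t f(y)` with `U` within `O(f(y))` of `y` (negligible,
by self-neglect of `f`), or `V > (y - L f(y)) / b` (negligible: `f(y) = o(y)`, `1/b > 1` and the
tail is rapidly varying), or both exceed `L f(y)` (negligible by the joint condition).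
Let `s, t → 0`.
-/

open MeasureTheory Filter Real Asymptotics Topology

/-- The tail `G = 1 - F` of a distribution `F ∈ MDA(Λ)` with auxiliary function `f`. -/
def IsGumbelTail (G f : ℝ → ℝ) : Prop :=
  ∀ x : ℝ, Tendsto (fun t => G (t + x * f t) / G t) atTop (𝓝 (exp (-x)))

theorem eventually_le_add_mul_of_isLittleO {f : ℝ → ℝ} (hf : f =o[atTop] id) {l κ : ℝ}
    (hlκ : l < κ) (m : ℝ) : ∀ᶠ y in atTop, l * y ≤ κ * y + m * f y := by
  filter_upwards [(hf.const_mul_left m).def (sub_pos.2 hlκ), eventually_ge_atTop 0] with y hy hy0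
  rw [Real.norm_eq_abs, id, Real.norm_of_nonneg hy0] at hy
  linarith [neg_abs_le (m * f y)]

theorem tendsto_add_mul_atTop_of_isLittleO {f : ℝ → ℝ} (hf : f =o[atTop] id) (s : ℝ) :
    Tendsto (fun y => y + s * f y) atTop atTop := by
  refine tendsto_atTop_mono' atTop ?_ (tendsto_id.const_mul_atTop (one_half_pos (α := ℝ)))
  filter_upwards [eventually_le_add_mul_of_isLittleO hf one_half_lt_one s] with y hy
  simpa using hy

namespace IsGumbelTail

variable {G f : ℝ → ℝ}

/-- If `t - f t / δ` fell below `0`, then `G (t - f t / δ) / G t ≥ G 0 / G t` would be unbounded. -/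
theorem isLittleO_id (hMDA : IsGumbelTail G f) (hG : Antitone G) (hGpos : ∀ x, 0 < G x)
    (hG0 : Tendsto G atTop (𝓝 0)) (hfpos : ∀ x, 0 < f x) : f =o[atTop] id := by
  refine isLittleO_iff.2 fun δ hδ => ?_
  set K := exp δ⁻¹ + 1
  have hK : 0 < K := by positivity
  have hratio : ∀ᶠ t in atTop, G (t + -δ⁻¹ * f t) / G t < K :=
    (hMDA (-δ⁻¹)).eventually (eventually_lt_nhds (by rw [neg_neg]; linarith))
  have hsmall : ∀ᶠ t in atTop, G t < G 0 / K :=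
    hG0.eventually (eventually_lt_nhds (div_pos (hGpos 0) hK))
  filter_upwards [hratio, hsmall, eventually_ge_atTop 0] with t hr hs ht
  rw [Real.norm_of_nonneg (hfpos t).le, id, Real.norm_of_nonneg ht]
  by_contra! hlt
  have hle : t ≤ δ⁻¹ * f t := by
    rw [← div_eq_inv_mul, le_div_iff₀ hδ]
    linarith
  have hG0le : G 0 ≤ G (t + -δ⁻¹ * f t) := hG (by linarith)
  rw [div_lt_iff₀ (hGpos t)] at hr
  rw [lt_div_iff₀ hK] at hs
  linarith

theorem tendsto_comp_mul_div (hMDA : IsGumbelTail G f) (hG : Antitone G) (hGpos : ∀ x, 0 < G x)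
    (hf : f =o[atTop] id) {l : ℝ} (hl : 1 < l) :
    Tendsto (fun y => G (l * y) / G y) atTop (𝓝 0) := by
  refine tendsto_order.2 ⟨fun a ha => Eventually.of_forall fun y =>
    ha.trans_le (div_nonneg (hGpos _).le (hGpos y).le), fun b hb => ?_⟩
  obtain ⟨M, hM⟩ := (tendsto_exp_neg_atTop_nhds_zero.eventually (eventually_lt_nhds hb)).exists
  filter_upwards [(hMDA M).eventually (eventually_lt_nhds hM),
    eventually_le_add_mul_of_isLittleO hf hl (-M)] with y hy hle
  calc G (l * y) / G y ≤ G (y + M * f y) / G y :=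
        div_le_div_of_nonneg_right (hG (by linarith)) (hGpos y).le
    _ < b := hy

theorem tendsto_comp_add_mul_div_of_tendsto_div (hMDA : IsGumbelTail G f) (hG : Antitone G)
    (hGpos : ∀ x, 0 < G x) (hf : f =o[atTop] id) {H : ℝ → ℝ} (hH : Antitone H)
    (hH0 : ∀ x, 0 ≤ H x) {c : ℝ} (hHG : Tendsto (fun x => H x / G x) atTop (𝓝 c))
    {κ : ℝ} (hκ : 1 < κ) (m : ℝ) :
    Tendsto (fun y => H (κ * y + m * f y) / G y) atTop (𝓝 0) := by
  obtain ⟨l, hl, hlκ⟩ := exists_between hκ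
  have hrapid : Tendsto (fun y => H (l * y) / G y) atTop (𝓝 0) := by
    have h := (hHG.comp (tendsto_id.const_mul_atTop (one_pos.trans hl))).mul
      (hMDA.tendsto_comp_mul_div hG hGpos hf hl)
    rw [mul_zero] at h
    exact h.congr fun y => div_mul_div_cancel₀ (hGpos _).ne'
  refine squeeze_zero' (Eventually.of_forall fun y => div_nonneg (hH0 _) (hGpos y).le) ?_ hrapid
  filter_upwards [eventually_le_add_mul_of_isLittleO hf hlκ m] with y hy
  exact div_le_div_of_nonneg_right (hH hy) (hGpos y).le

/-- Self-neglect of `f` lets the threshold `t * f y` follow the shift `y ↦ y + s * f y`. -/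
theorem tendsto_shift_div (hMDA : IsGumbelTail G f) (hGpos : ∀ x, 0 < G x)
    (hf : f =o[atTop] id) (hfpos : ∀ x, 0 < f x)
    (hself : ∀ x : ℝ, Tendsto (fun t => f (t + x * f t) / f t) atTop (𝓝 1))
    {p : ℝ → ℝ → ℝ} (hp : ∀ x, Antitone (p · x)) (hp0 : ∀ t x, 0 ≤ p t x)
    (hcond : ∀ t > 0, Tendsto (fun x => p (t * f x) x / G x) atTop (𝓝 0))
    {t : ℝ} (ht : 0 < t) (s : ℝ) :
    Tendsto (fun y => p (t * f y) (y + s * f y) / G y) atTop (𝓝 0) := by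
  have hlim := ((hcond (t / 2) (half_pos ht)).comp
    (tendsto_add_mul_atTop_of_isLittleO hf s)).mul (hMDA s)
  rw [zero_mul] at hlim
  refine squeeze_zero' (Eventually.of_forall fun y => div_nonneg (hp0 _ _) (hGpos y).le) ?_ hlim
  filter_upwards [(hself s).eventually (eventually_lt_nhds one_lt_two)] with y hy
  have hshrink : t / 2 * f (y + s * f y) ≤ t * f y := by
    rw [div_lt_iff₀ (hfpos y)] at hy
    nlinarith
  calc p (t * f y) (y + s * f y) / G y
      ≤ p (t / 2 * f (y + s * f y)) (y + s * f y) / G y :=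
        div_le_div_of_nonneg_right (hp _ hshrink) (hGpos y).le
    _ = _ := (div_mul_div_cancel₀ (hGpos _).ne').symm

end IsGumbelTail

section Tail

variable {Ω : Type*} {U V : Ω → ℝ}

theorem setOf_lt_add_subset {b w : ℝ} (hb : 0 ≤ b) (hw : 0 ≤ w) (y : ℝ) :
    {ω | y + b * w < U ω} ⊆ {ω | y < U ω + b * V ω} ∪ {ω | w < |V ω| ∧ y < U ω} := by
  intro ω (hU : y + b * w < U ω)
  by_cases hV : w < |V ω|
  · exact Or.inr ⟨hV, by nlinarith⟩
  · left
    show y < U ω + b * V ω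
    nlinarith [neg_abs_le (V ω)]

theorem setOf_lt_add_mul_subset {b : ℝ} (hb : 0 < b) (y w M : ℝ) :
    {ω | y < U ω + b * V ω} ⊆ {ω | y - b * w < U ω} ∪ {ω | w < |V ω| ∧ y - b * M < U ω} ∪
      {ω | (y - M) / b < V ω} ∪ {ω | M < V ω ∧ M < U ω} := by
  intro ω (h : y < U ω + b * V ω)
  rcases le_or_gt |V ω| w with hV | hV
  · refine Or.inl (Or.inl (Or.inl (?_ : y - b * w < U ω)))
    nlinarith [le_abs_self (V ω)]
  rcases lt_or_ge (y - b * M) (U ω) with hU | hU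
  · exact Or.inl (Or.inl (Or.inr ⟨hV, hU⟩))
  have hVM : M < V ω := lt_of_mul_lt_mul_left (by linarith) hb.le
  rcases le_or_gt (U ω) M with hUM | hUM
  · refine Or.inl (Or.inr (?_ : (y - M) / b < V ω))
    rw [div_lt_iff₀ hb]
    linarith
  · exact Or.inr ⟨hVM, hUM⟩

variable [MeasurableSpace Ω] {μ : Measure Ω}

def tail (μ : Measure Ω) (X : Ω → ℝ) (x : ℝ) : ℝ := μ.real {ω | x < X ω}

theorem tail_eq_one_sub [IsProbabilityMeasure μ] {X : Ω → ℝ} (hX : Measurable X) (x : ℝ) :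
    tail μ X x = 1 - μ.real {ω | X ω ≤ x} := by
  rw [← probReal_compl_eq_one_sub (measurableSet_le hX measurable_const)]
  simp only [tail, Set.compl_ofPred, not_le]

theorem tendsto_tail_atTop [IsProbabilityMeasure μ] {X : Ω → ℝ} (hX : Measurable X) :
    Tendsto (tail μ X) atTop (𝓝 0) := by
  have := Measure.isProbabilityMeasure_map (μ := μ) hX.aemeasurable
  have hcdf (x : ℝ) : tail μ X x = 1 - ProbabilityTheory.cdf (μ.map X) x := by
    rw [tail_eq_one_sub hX, ProbabilityTheory.cdf_eq_real,
      map_measureReal_apply hX measurableSet_Iic]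
    rfl
  simpa only [funext hcdf, sub_self] using
    (ProbabilityTheory.tendsto_cdf_atTop (μ := μ.map X)).const_sub 1

variable [IsFiniteMeasure μ]

theorem antitone_tail (X : Ω → ℝ) : Antitone (tail μ X) :=
  fun _ _ hxy => measureReal_mono fun _ (h : _ < _) => hxy.trans_lt h

theorem tail_add_mul_le {b w : ℝ} (hb : 0 ≤ b) (hw : 0 ≤ w) (y : ℝ) :
    tail μ U (y + b * w) ≤
      tail μ (fun ω => U ω + b * V ω) y + μ.real {ω | w < |V ω| ∧ y < U ω} :=
  (measureReal_mono (setOf_lt_add_subset hb hw y)).trans (measureReal_union_le _ _)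

theorem tail_add_mul_le_add {b : ℝ} (hb : 0 < b) (y w M : ℝ) :
    tail μ (fun ω => U ω + b * V ω) y ≤
      tail μ U (y - b * w) + μ.real {ω | w < |V ω| ∧ y - b * M < U ω} +
        tail μ V ((y - M) / b) + μ.real {ω | M < V ω ∧ M < U ω} := by
  refine (measureReal_mono (setOf_lt_add_mul_subset hb y w M)).trans ?_
  grw [measureReal_union_le, measureReal_union_le, measureReal_union_le]
  rfl

end Tail

section TailOfSum

variable {Ω : Type*} [MeasurableSpace Ω] {μ : Measure Ω} [IsFiniteMeasure μ] {U V : Ω → ℝ}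
  {f : ℝ → ℝ} {b : ℝ}

theorem eventually_lt_tail_add_mul_div (hb : 0 < b) (hGpos : ∀ x, 0 < tail μ U x)
    (hMDA : IsGumbelTail (tail μ U) f) (hfpos : ∀ x, 0 < f x)
    (hcond : ∀ t > 0, Tendsto (fun x => μ.real {ω | t * f x < |V ω| ∧ x < U ω} / tail μ U x)
      atTop (𝓝 0))
    {a : ℝ} (ha : a < 1) :
    ∀ᶠ y in atTop, a < tail μ (fun ω => U ω + b * V ω) y / tail μ U y := by
  set s := (1 - a) / 2 with hs_def
  have hs : 0 < s := by positivity
  have hbt : b * (s / b) = s := mul_div_cancel₀ s hb.ne'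
  have hlim := (hMDA (b * (s / b))).sub (hcond (s / b) (div_pos hs hb))
  have hexp : a < exp (-(b * (s / b))) - 0 := by
    rw [hbt, sub_zero]
    linarith [add_one_le_exp (-s), hs_def]
  filter_upwards [hlim.eventually (eventually_gt_nhds hexp)] with y hy
  refine hy.trans_le ?_
  rw [← sub_div, div_le_div_iff_of_pos_right (hGpos y), sub_le_iff_le_add]
  have h := tail_add_mul_le (μ := μ) (U := U) (V := V) hb.le
    (mul_nonneg (div_pos hs hb).le (hfpos y).le) y
  rwa [← mul_assoc] at h

theorem eventually_tail_add_mul_div_lt (hb0 : 0 < b) (hb1 : b < 1) {c L : ℝ}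
    (hGpos : ∀ x, 0 < tail μ U x) (hG0 : Tendsto (tail μ U) atTop (𝓝 0))
    (hMDA : IsGumbelTail (tail μ U) f) (hfpos : ∀ x, 0 < f x)
    (hself : ∀ x : ℝ, Tendsto (fun t => f (t + x * f t) / f t) atTop (𝓝 1))
    (hratio : Tendsto (fun x => tail μ V x / tail μ U x) atTop (𝓝 c))
    (hcond : ∀ t > 0, Tendsto (fun x => μ.real {ω | t * f x < |V ω| ∧ x < U ω} / tail μ U x)
      atTop (𝓝 0))
    (hjoint : Tendsto (fun x => μ.real {ω | L * f x < V ω ∧ L * f x < U ω} / tail μ U x)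
      atTop (𝓝 0))
    {a : ℝ} (ha : 1 < a) :
    ∀ᶠ y in atTop, tail μ (fun ω => U ω + b * V ω) y / tail μ U y < a := by
  have hf := hMDA.isLittleO_id (antitone_tail U) hGpos hG0 hfpos
  set t := log a / 2 / b
  have ht : 0 < t := div_pos (half_pos (log_pos ha)) hb0
  have hbt : b * t = log a / 2 := mul_div_cancel₀ _ hb0.ne'
  have hA : Tendsto (fun y => tail μ U (y - b * (t * f y)) / tail μ U y) atTop
      (𝓝 (exp (b * t))) := by
    refine (neg_neg (b * t) ▸ hMDA (-(b * t))).congr fun y => ?_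
    rw [neg_mul, ← sub_eq_add_neg, mul_assoc]
  have hB : Tendsto (fun y => μ.real {ω | t * f y < |V ω| ∧ y - b * (L * f y) < U ω} /
      tail μ U y) atTop (𝓝 0) := by
    refine (hMDA.tendsto_shift_div hGpos hf hfpos hself
      (p := fun t x => μ.real {ω | t < |V ω| ∧ x < U ω})
      (fun _ _ _ h => measureReal_mono fun _ hω => ⟨h.trans_lt hω.1, hω.2⟩)
      (fun _ _ => measureReal_nonneg) hcond ht (-(b * L))).congr fun y => ?_
    rw [neg_mul, ← sub_eq_add_neg, mul_assoc]
  have hC : Tendsto (fun y => tail μ V ((y - L * f y) / b) / tail μ U y) atTop (𝓝 0) := by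
    refine (hMDA.tendsto_comp_add_mul_div_of_tendsto_div (antitone_tail U) hGpos hf
      (antitone_tail V) (fun _ => measureReal_nonneg) hratio ((one_lt_inv₀ hb0).2 hb1)
      (-(L / b))).congr fun y => ?_
    congr 2
    ring
  have hlim := ((hA.add hB).add hC).add hjoint
  have hexp : exp (b * t) + 0 + 0 + 0 < a := by
    rw [hbt, add_zero, add_zero, add_zero]
    exact (exp_lt_exp.2 (half_lt_self (log_pos ha))).trans_eq (exp_log (one_pos.trans ha))
  filter_upwards [hlim.eventually (eventually_lt_nhds hexp)] with y hy
  refine lt_of_le_of_lt ?_ hy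
  simp only [← add_div]
  exact div_le_div_of_nonneg_right (tail_add_mul_le_add hb0 y (t * f y) (L * f y))
    (hGpos y).le

theorem tendsto_tail_add_mul_div_tail (hb0 : 0 < b) (hb1 : b < 1) {c L : ℝ}
    (hGpos : ∀ x, 0 < tail μ U x) (hG0 : Tendsto (tail μ U) atTop (𝓝 0))
    (hMDA : IsGumbelTail (tail μ U) f) (hfpos : ∀ x, 0 < f x)
    (hself : ∀ x : ℝ, Tendsto (fun t => f (t + x * f t) / f t) atTop (𝓝 1))
    (hratio : Tendsto (fun x => tail μ V x / tail μ U x) atTop (𝓝 c))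
    (hcond : ∀ t > 0, Tendsto (fun x => μ.real {ω | t * f x < |V ω| ∧ x < U ω} / tail μ U x)
      atTop (𝓝 0))
    (hjoint : Tendsto (fun x => μ.real {ω | L * f x < V ω ∧ L * f x < U ω} / tail μ U x)
      atTop (𝓝 0)) :
    Tendsto (fun y => tail μ (fun ω => U ω + b * V ω) y / tail μ U y) atTop (𝓝 1) :=
  tendsto_order.2
    ⟨fun _ ha => eventually_lt_tail_add_mul_div hb0 hGpos hMDA hfpos hcond ha,
      fun _ ha => eventually_tail_add_mul_div_lt hb0 hb1 hGpos hG0 hMDA hfpos hself hratio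
        hcond hjoint ha⟩

end TailOfSum

theorem stmt_16_general {Ω : Type*} [MeasurableSpace Ω] (ℙ : Measure Ω) [IsProbabilityMeasure ℙ]
    (U V : Ω → ℝ) (hUm : Measurable U)
    (F f : ℝ → ℝ) (c : ℝ)
    (hF : ∀ x, F x = (ℙ {ω | U ω ≤ x}).toReal)
    (hend : ∀ x, F x < 1)
    (hfpos : ∀ x, 0 < f x)
    (hself : ∀ x : ℝ, Tendsto (fun t => f (t + x * f t) / f t) atTop (nhds 1))
    (hMDA : ∀ x : ℝ, Tendsto (fun t => (1 - F (t + x * f t)) / (1 - F t))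
      atTop (nhds (Real.exp (-x))))
    (hratio : Tendsto (fun x =>
      (ℙ {ω | V ω > x}).toReal / (ℙ {ω | U ω > x}).toReal) atTop (nhds c))
    (hcondV : ∀ t > (0:ℝ), Tendsto (fun x =>
      (ℙ {ω | |V ω| > t * f x ∧ U ω > x}).toReal / (ℙ {ω | U ω > x}).toReal)
      atTop (nhds 0))
    (hjoint : ∃ L > (0:ℝ), Tendsto (fun x =>
      (ℙ {ω | V ω > L * f x ∧ U ω > L * f x}).toReal / (ℙ {ω | U ω > x}).toReal)
      atTop (nhds 0))
    (a₁ a₂ : ℝ) (ha : a₁ > a₂) (ha₂ : a₂ > 0) :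
    Tendsto (fun x =>
      (ℙ {ω | a₁ * U ω + a₂ * V ω > x}).toReal / (ℙ {ω | U ω > x / a₁}).toReal)
      atTop (nhds 1) := by
  obtain ⟨L, -, hL⟩ := hjoint
  have ha₁ : 0 < a₁ := ha₂.trans ha
  have htail : tail ℙ U = fun x => 1 - F x := by
    ext x
    rw [tail_eq_one_sub hUm, hF, measureReal_def]
  have hmain := tendsto_tail_add_mul_div_tail (div_pos ha₂ ha₁) ((div_lt_one ha₁).2 ha)
    (fun x => htail ▸ sub_pos.2 (hend x)) (tendsto_tail_atTop hUm) (htail ▸ hMDA) hfpos hself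
    hratio hcondV hL
  refine (hmain.comp (tendsto_id.atTop_div_const ha₁)).congr fun x => ?_
  simp only [Function.comp_apply, id, tail]
  congr 2
  ext ω
  show x / a₁ < U ω + a₂ / a₁ * V ω ↔ x < a₁ * U ω + a₂ * V ω
  rw [div_lt_iff₀ ha₁, show (U ω + a₂ / a₁ * V ω) * a₁ = a₁ * U ω + a₂ * V ω by field_simp]

/-- Under the tail-equivalence assumptions with `c ∈ (0,∞)`, for coefficients
`a₁ > a₂ > 0` one has `P(a₁U + a₂V > x) ∼ P(U > x/a₁)` as `x → ∞`. -/
theorem stmt_16 {Ω : Type*} [MeasurableSpace Ω] (ℙ : Measure Ω) [IsProbabilityMeasure ℙ]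
    (U V : Ω → ℝ) (hUm : Measurable U) (hVm : Measurable V)
    (F f : ℝ → ℝ) (c : ℝ) (hc : 0 < c)
    (hF : ∀ x, F x = (ℙ {ω | U ω ≤ x}).toReal)
    (hend : ∀ x, F x < 1)
    (hfpos : ∀ x, 0 < f x)
    (hself : ∀ x : ℝ, Tendsto (fun t => f (t + x * f t) / f t) atTop (nhds 1))
    (hMDA : ∀ x : ℝ, Tendsto (fun t => (1 - F (t + x * f t)) / (1 - F t))
      atTop (nhds (Real.exp (-x))))
    (hratio : Tendsto (fun x =>
      (ℙ {ω | V ω > x}).toReal / (ℙ {ω | U ω > x}).toReal) atTop (nhds c))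
    (hcondV : ∀ t > (0:ℝ), Tendsto (fun x =>
      (ℙ {ω | |V ω| > t * f x ∧ U ω > x}).toReal / (ℙ {ω | U ω > x}).toReal)
      atTop (nhds 0))
    (hcondU : ∀ t > (0:ℝ), Tendsto (fun x =>
      (ℙ {ω | |U ω| > t * f x ∧ V ω > x}).toReal / (ℙ {ω | V ω > x}).toReal)
      atTop (nhds 0))
    (hjoint : ∃ L > (0:ℝ), Tendsto (fun x =>
      (ℙ {ω | V ω > L * f x ∧ U ω > L * f x}).toReal / (ℙ {ω | U ω > x}).toReal)
      atTop (nhds 0))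
    (a₁ a₂ : ℝ) (ha : a₁ > a₂) (ha₂ : a₂ > 0) :
    Tendsto (fun x =>
      (ℙ {ω | a₁ * U ω + a₂ * V ω > x}).toReal / (ℙ {ω | U ω > x / a₁}).toReal)
      atTop (nhds 1) :=
  stmt_16_general ℙ U V hUm F f c hF hend hfpos hself hMDA hratio hcondV hjoint a₁ a₂ ha ha₂
end
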